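/- arXiv:1903.00427 — 6 statements merged into one kernel-verified Lean document; each statement's English description precedes it below -/
import Mathlib

section
/- Let D ≥ 1, let δ = 1/(3D), and fix 0 < ε̄ < δ/2. For all β large enough (and n large enough), the single-particle stationary probability λ(0) of the Z chain satisfies λ(0) ≥ 1 − δ + ε̄; consequently, if Z(0) denotes the number of particles at position 0 under the stationary distribution of the Z chain (so Z(0) is Binomial(n, λ(0))), then 𝔼[Z(0)] ≥ (1−δ+ε̄)n and ℙ(Z(0) ≤ (1−δ)n) ≤ 2·exp(−2ε̄²n). -/
namespace ARW

open Finset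

variable {V : Type*} [Fintype V] [DecidableEq V]

/-- Number of particles at vertex `v` in configuration `x`. -/
def cnt {n : ℕ} (x : Sym V n) (v : V) : ℕ := Multiset.count v (x : Multiset V)

/-- Normalization constant `Z` for a particle at vertex `i`. -/
noncomputable def Zf (G : SimpleGraph V) [DecidableRel G.Adj] (β : ℝ) (n : ℕ)
    (x : V → ℕ) (i : V) : ℝ :=
  (∑ l ∈ G.neighborFinset i, Real.exp (β / n * x l)) + Real.exp (β / n * ((x i : ℝ) - 1))

/-- Single-particle transition probability `P_x(i,j)` of the ARW model. -/
noncomputable def stepP (G : SimpleGraph V) [DecidableRel G.Adj] (β : ℝ) (n : ℕ)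
    (x : V → ℕ) (i j : V) : ℝ :=
  if G.Adj i j then Real.exp (β / n * x j) / Zf G β n x i
  else if i = j then Real.exp (β / n * ((x i : ℝ) - 1)) / Zf G β n x i
  else 0

/-- Transition matrix of the Attracting Random Walks chain on configurations of
`n` particles (elements of `Sym V n`). -/
noncomputable def arwP (G : SimpleGraph V) [DecidableRel G.Adj] (β : ℝ) (n : ℕ)
    (x y : Sym V n) : ℝ :=
  ∑ i, ∑ j, ((cnt x i : ℝ) / n) * stepP G β n (cnt x) i j *
    (if (y : Multiset V) = j ::ₘ ((x : Multiset V).erase i) then 1 else 0)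

/-- `t`-step transition probabilities of a kernel `P`. -/
noncomputable def iterP {S : Type*} [Fintype S] [DecidableEq S] (P : S → S → ℝ) :
    ℕ → S → S → ℝ
  | 0 => fun x y => if x = y then 1 else 0
  | t + 1 => fun x y => ∑ z, iterP P t x z * P z y

/-- Total variation distance between two (densities of) measures on a finite set. -/
noncomputable def tv {S : Type*} [Fintype S] (μ ν : S → ℝ) : ℝ :=
  (1 / 2) * ∑ s, |μ s - ν s|

/-- `π` is a stationary distribution of the kernel `P`. -/
def IsStationary {S : Type*} [Fintype S] (P : S → S → ℝ) (π : S → ℝ) : Prop :=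
  (∀ s, 0 ≤ π s) ∧ (∑ s, π s = 1) ∧ (∀ y, ∑ x, π x * P x y = π y)

/-- Worst-case total variation distance to stationarity at time `t`. -/
noncomputable def tvd {S : Type*} [Fintype S] [DecidableEq S] (P : S → S → ℝ)
    (π : S → ℝ) (t : ℕ) : ℝ :=
  ⨆ x : S, tv (iterP P t x) π

/-- Mixing time `t_mix(ε)`. -/
noncomputable def tmix {S : Type*} [Fintype S] [DecidableEq S] (P : S → S → ℝ)
    (π : S → ℝ) (ε : ℝ) : ℕ :=
  sInf {t : ℕ | tvd P π t ≤ ε}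

/-- Single-particle transition probabilities of the comparison `Z` chain on the path
`{0,1,…,D}` (see the paper, Figures 4–5). -/
noncomputable def zsp (D : ℕ) (p q : ℝ) (d e : Fin (D + 1)) : ℝ :=
  if (d : ℕ) ≤ 1 then
    (if (e : ℕ) = 0 then q else 0) +
      (if (e : ℕ) = min ((d : ℕ) + 1) D then 1 - q else 0)
  else
    (if (e : ℕ) = (d : ℕ) - 1 then p else 0) +
      (if (e : ℕ) = min ((d : ℕ) + 1) D then 1 - p else 0)


section Aux
lemma exp_third_le_two : Real.exp ((1:ℝ)/3) ≤ 2 := by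
  rw [show (2:ℝ) = Real.exp (Real.log 2) from (Real.exp_log (by norm_num)).symm]
  apply Real.exp_le_exp.mpr
  linarith [Real.log_two_gt_d9]

lemma exp_quad {s : ℝ} (hs : 0 ≤ s) : Real.exp (-s) ≤ 1 - s + s^2/2 := by
  have h := Real.quadratic_le_exp_of_nonneg hs
  have h2 : Real.exp (-s) * Real.exp s = 1 := by rw [← Real.exp_add]; simp
  nlinarith [Real.exp_pos s, Real.exp_pos (-s), sq_nonneg (s^2), sq_nonneg (s-1)]

lemma chernoff (n : ℕ) (a t ε : ℝ) (ha : 0 ≤ a) (ht1 : t ≤ 1) (hε : 0 < ε)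
    (hs1 : 2*ε ≤ 1) (hta : a + 2*ε ≤ t) :
    (∑ m ∈ Finset.range (n+1), if (m:ℝ) ≤ a*n then (n.choose m : ℝ) * t^m * (1-t)^(n-m) else 0)
      ≤ Real.exp (-2*ε^2*n) := by
  set s : ℝ := 2*ε with hs
  have hs0 : 0 < s := by positivity
  have ht0 : 0 ≤ t := by linarith
  have h1t : 0 ≤ 1 - t := by linarith
  have key : ∀ m ∈ Finset.range (n+1),
      (if (m:ℝ) ≤ a*n then (n.choose m:ℝ) * t^m * (1-t)^(n-m) else 0)
        ≤ Real.exp (s*(a*n)) * ((t*Real.exp (-s))^m * (1-t)^(n-m) * (n.choose m:ℝ)) := by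
    intro m _
    have hrw : Real.exp (s*(a*n)) * ((t*Real.exp (-s))^m * (1-t)^(n-m) * (n.choose m:ℝ))
        = Real.exp (s*(a*n - m)) * ((n.choose m:ℝ) * t^m * (1-t)^(n-m)) := by
      rw [mul_pow, ← Real.exp_nat_mul]
      rw [show s*(a*n - m) = s*(a*n) + (m:ℝ)*(-s) by ring, Real.exp_add]
      ring
    rw [hrw]
    split_ifs with hm
    · have h1 : (1:ℝ) ≤ Real.exp (s*(a*n - m)) := by
        rw [← Real.exp_zero]
        exact Real.exp_le_exp.mpr (by nlinarith)
      have h2 : (0:ℝ) ≤ (n.choose m:ℝ) * t^m * (1-t)^(n-m) := by positivity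
      nlinarith
    · positivity
  calc (∑ m ∈ Finset.range (n+1), if (m:ℝ) ≤ a*n then (n.choose m : ℝ) * t^m * (1-t)^(n-m) else 0)
      ≤ ∑ m ∈ Finset.range (n+1),
          Real.exp (s*(a*n)) * ((t*Real.exp (-s))^m * (1-t)^(n-m) * (n.choose m:ℝ)) :=
        Finset.sum_le_sum key
    _ = Real.exp (s*(a*n)) * (t*Real.exp (-s) + (1-t))^n := by
        rw [← Finset.mul_sum, add_pow]
    _ ≤ Real.exp (s*(a*n)) * (Real.exp (-(t*(1-Real.exp (-s)))))^n := by
        apply mul_le_mul_of_nonneg_left _ (Real.exp_pos _).le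
        apply pow_le_pow_left₀ (by positivity)
        have := Real.add_one_le_exp (-(t*(1-Real.exp (-s))))
        linarith
    _ = Real.exp (s*(a*n) + n * (-(t*(1-Real.exp (-s))))) := by
        rw [← Real.exp_nat_mul, ← Real.exp_add]
    _ ≤ Real.exp (-2*ε^2*n) := by
        apply Real.exp_le_exp.mpr
        have hcore : s*a + (-(t*(1-Real.exp (-s)))) ≤ -2*ε^2 := by
          have hq := exp_quad hs0.le
          have h3 : s - s^2/2 ≤ 1 - Real.exp (-s) := by linarith
          have h4 : 0 ≤ s - s^2/2 := by nlinarith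
          have h5 : (a+s)*(s - s^2/2) ≤ t*(1-Real.exp (-s)) := by
            apply mul_le_mul (by linarith) h3 h4 (by linarith)
          nlinarith
        have hn : (0:ℝ) ≤ n := Nat.cast_nonneg n
        nlinarith

variable {D : ℕ} {p q : ℝ} {lam : Fin (D+1) → ℝ}


lemma sum_eval0 (hD : 1 ≤ D) (i j : Fin (D+1)) (hi : (i:ℕ) = 0) (hj : (j:ℕ) = 1) :
    ∑ d, lam d * zsp D p q d i = (lam i + lam j) * q := by
  have hij : i ≠ j := fun h => by rw [h, hj] at hi; omega
  have hzero : ∀ d ∈ (Finset.univ : Finset (Fin (D+1))), d ∉ ({i, j} : Finset (Fin (D+1))) →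
      lam d * zsp D p q d i = 0 := by
    intro d _ hd
    simp only [Finset.mem_insert, Finset.mem_singleton] at hd
    push_neg at hd
    have hd1 : (d:ℕ) ≠ 0 := fun h => hd.1 (Fin.ext (by omega))
    have hd2 : (d:ℕ) ≠ 1 := fun h => hd.2 (Fin.ext (by omega))
    have hdD : (d:ℕ) ≤ D := by omega
    have : zsp D p q d i = 0 := by
      simp only [zsp, hi]
      split_ifs <;> first | omega | ring
    rw [this, mul_zero]
  have hzi : zsp D p q i i = q := by
    simp only [zsp, hi]
    split_ifs <;> first | omega | ring
  have hzj : zsp D p q j i = q := by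
    simp only [zsp, hi, hj]
    split_ifs <;> first | omega | ring
  rw [← Finset.sum_subset (Finset.subset_univ ({i,j} : Finset (Fin (D+1)))) hzero,
    Finset.sum_pair hij, hzi, hzj]
  ring

lemma sum_eval_mid (c : ℕ) (hc1 : 1 ≤ c) (hc : c < D) (i j k : Fin (D+1))
    (hi : (i:ℕ) = c - 1) (hj : (j:ℕ) = c) (hk : (k:ℕ) = c + 1) :
    ∑ d, lam d * zsp D p q d j
      = lam i * (1 - (if c - 1 ≤ 1 then q else p)) + lam k * p := by
  have hik : i ≠ k := fun h => by rw [h, hk] at hi; omega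
  have hzero : ∀ d ∈ (Finset.univ : Finset (Fin (D+1))), d ∉ ({i, k} : Finset (Fin (D+1))) →
      lam d * zsp D p q d j = 0 := by
    intro d _ hd
    simp only [Finset.mem_insert, Finset.mem_singleton] at hd
    push_neg at hd
    have hd1 : (d:ℕ) ≠ c - 1 := fun h => hd.1 (Fin.ext (by omega))
    have hd2 : (d:ℕ) ≠ c + 1 := fun h => hd.2 (Fin.ext (by omega))
    have hdD : (d:ℕ) ≤ D := by omega
    have : zsp D p q d j = 0 := by
      simp only [zsp, hj]
      split_ifs <;> first | omega | ring
    rw [this, mul_zero]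
  have hzi : zsp D p q i j = 1 - (if c - 1 ≤ 1 then q else p) := by
    have hiD : (i:ℕ) ≤ D := by omega
    simp only [zsp, hi, hj]
    split_ifs <;> first | omega | ring
  have hzk : zsp D p q k j = p := by
    simp only [zsp, hj, hk]
    split_ifs <;> first | omega | ring
  rw [← Finset.sum_subset (Finset.subset_univ ({i,k} : Finset (Fin (D+1)))) hzero,
    Finset.sum_pair hik, hzi, hzk]

lemma cut (hD : 1 ≤ D) (hs : ∀ e, ∑ d, lam d * zsp D p q d e = lam e) :
    ∀ c, (hc : c < D) →
      lam ⟨c+1, by omega⟩ * (if c+1 ≤ 1 then q else p)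
        = lam ⟨c, by omega⟩ * (1 - (if c ≤ 1 then q else p)) := by
  intro c
  induction c with
  | zero =>
    intro hc
    have h0 := hs ⟨0, by omega⟩
    rw [sum_eval0 hD ⟨0, by omega⟩ ⟨1, by omega⟩ rfl rfl] at h0
    simp only [show (0:ℕ) ≤ 1 by omega, if_pos, show (0+1:ℕ) ≤ 1 by omega]
    nlinarith [h0]
  | succ c ih =>
    intro hc
    have hcD : c < D := by omega
    have ihc := ih hcD
    have h1 := hs ⟨c+1, by omega⟩
    rw [sum_eval_mid (c+1) (by omega) hc ⟨c, by omega⟩ ⟨c+1, by omega⟩ ⟨c+2, by omega⟩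
      (by simp) rfl rfl] at h1
    simp only [show c+1-1 = c by omega] at h1
    have hc2 : ¬ (c+1+1 ≤ 1) := by omega
    rw [if_neg hc2]
    linarith

lemma chain_bound (hD : 1 ≤ D) (hp0 : 0 < p) (hp1 : p ≤ 1) (hq0 : 0 < q) (hq1 : q ≤ 1)
    (h0 : ∀ e, 0 ≤ lam e) (h1 : ∑ e, lam e = 1)
    (hs : ∀ e, ∑ d, lam d * zsp D p q d e = lam e) :
    1 ≤ lam 0 * (1 + ((1-q)/q + D * ((1-q)/q)^2 * (1/p)^D)) := by
  set E : ℝ := (1-q)/q with hE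
  set R : ℝ := 1/p with hR
  have hq1' : 0 ≤ 1 - q := by linarith
  have hEnn : 0 ≤ E := div_nonneg hq1' hq0.le
  have hR1 : 1 ≤ R := by rw [hR, le_div_iff₀ hp0]; linarith
  have hR0 : 0 < R := by linarith
  have h00 : (⟨0, by omega⟩ : Fin (D+1)) = 0 := rfl
  have hl0 : 0 ≤ lam 0 := h0 0
  -- lam 1 = lam 0 * E
  have hcut := cut hD hs
  have hlam1 : lam ⟨1, by omega⟩ = lam 0 * E := by
    have := hcut 0 (by omega)
    simp only [show (0+1 : ℕ) ≤ 1 by omega, if_pos, show (0:ℕ) ≤ 1 by omega, h00] at this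
    rw [hE, mul_div_assoc']
    rw [eq_div_iff hq0.ne']
    linarith
  have hlam1' : lam ⟨1, by omega⟩ ≤ lam 0 * E := le_of_eq hlam1
  -- lam d ≤ lam 0 * E^2 * R^(d-1) for 2 ≤ d ≤ D
  have hgeo : ∀ d, 2 ≤ d → ∀ (hd : d ≤ D), lam ⟨d, by omega⟩ ≤ lam 0 * (E^2 * R^(d-1)) := by
    intro d hd2
    induction d, hd2 using Nat.le_induction with
    | base =>
      intro hd
      have hc := hcut 1 (by omega)
      rw [if_neg (show ¬((1+1 : ℕ) ≤ 1) by omega), if_pos (show (1:ℕ) ≤ 1 by omega)] at hc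
      -- hc : lam ⟨2,_⟩ * p = lam ⟨1,_⟩ * (1 - q)
      have hl1nn : 0 ≤ lam ⟨1, by omega⟩ := h0 _
      have h1q : 1 - q ≤ E := by
        rw [hE, le_div_iff₀ hq0]; nlinarith
      have : lam ⟨2, by omega⟩ * p ≤ (lam 0 * E) * E := by
        calc lam ⟨2, by omega⟩ * p = lam ⟨1, by omega⟩ * (1-q) := hc
          _ ≤ (lam 0 * E) * E := by
              apply mul_le_mul hlam1' h1q hq1' (by positivity)
      rw [show (2:ℕ)-1 = 1 by omega, pow_one, hR]
      calc lam ⟨2, by omega⟩ ≤ (lam 0 * E * E) / p := by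
            rw [le_div_iff₀ hp0]; linarith
        _ = lam 0 * (E^2 * (1/p)) := by ring
    | succ d hd2 ih =>
      intro hd
      have ihd := ih (by omega)
      have hc := hcut d (by omega)
      rw [if_neg (show ¬((d+1 : ℕ) ≤ 1) by omega), if_neg (show ¬(d ≤ 1) by omega)] at hc
      -- hc : lam ⟨d+1,_⟩ * p = lam ⟨d,_⟩ * (1 - p)
      have hldnn : 0 ≤ lam ⟨d, by omega⟩ := h0 _
      have : lam ⟨d+1, by omega⟩ * p ≤ lam ⟨d, by omega⟩ := by
        rw [hc]; nlinarith
      have h2 : lam ⟨d+1, by omega⟩ ≤ lam ⟨d, by omega⟩ * R := by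
        rw [hR, mul_one_div, le_div_iff₀ hp0]; linarith
      calc lam ⟨d+1, by omega⟩ ≤ lam ⟨d, by omega⟩ * R := h2
        _ ≤ (lam 0 * (E^2 * R^(d-1))) * R := by
            apply mul_le_mul_of_nonneg_right ihd hR0.le
        _ = lam 0 * (E^2 * R^(d+1-1)) := by
            rw [show d+1-1 = (d-1)+1 by omega, pow_succ]; ring
  -- sum bound
  set g : ℕ → ℝ := fun c => if h : c ≤ D then lam ⟨c, Nat.lt_succ_of_le h⟩ else 0 with hg
  have hsum_eq : ∑ e : Fin (D+1), lam e = ∑ c ∈ Finset.range (D+1), g c := by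
    rw [Finset.sum_range fun c => g c]
    apply Finset.sum_congr rfl
    intro e _
    simp only [hg]
    rw [dif_pos (by omega : (e:ℕ) ≤ D)]
  have honeeq : (1:ℝ) = g 0 + g 1 + ∑ c ∈ Finset.range (D-1), g (c+1+1) := by
    rw [← h1, hsum_eq, show D+1 = (D-1)+1+1 by omega, Finset.sum_range_succ',
      Finset.sum_range_succ']
    norm_num
    ring
  have hg0 : g 0 = lam 0 := by simp only [hg]; rw [dif_pos (by omega : (0:ℕ) ≤ D)]; rfl
  have hg1 : g 1 ≤ lam 0 * E := by
    simp only [hg]; rw [dif_pos (by omega : (1:ℕ) ≤ D)]; exact hlam1'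
  have hbodynn : 0 ≤ lam 0 * (E^2 * R^D) := by
    apply mul_nonneg hl0 (mul_nonneg (sq_nonneg E) (pow_nonneg hR0.le D))
  have hS : ∑ c ∈ Finset.range (D-1), g (c+1+1) ≤ (D:ℝ) * (lam 0 * (E^2 * R^D)) := by
    have hb : ∀ c ∈ Finset.range (D-1), g (c+1+1) ≤ lam 0 * (E^2 * R^D) := by
      intro c hc
      rw [Finset.mem_range] at hc
      have hcd : c + 1 + 1 ≤ D := by omega
      simp only [hg]
      rw [dif_pos hcd]
      calc lam ⟨c+1+1, Nat.lt_succ_of_le hcd⟩ ≤ lam 0 * (E^2 * R^(c+1+1-1)) :=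
            hgeo (c+1+1) (by omega) hcd
        _ ≤ lam 0 * (E^2 * R^D) := by
            apply mul_le_mul_of_nonneg_left _ hl0
            apply mul_le_mul_of_nonneg_left _ (sq_nonneg E)
            exact pow_le_pow_right₀ hR1 (by omega)
    calc ∑ c ∈ Finset.range (D-1), g (c+1+1)
        ≤ (Finset.range (D-1)).card • (lam 0 * (E^2 * R^D)) :=
          Finset.sum_le_card_nsmul _ _ _ hb
      _ = ((D-1:ℕ):ℝ) * (lam 0 * (E^2 * R^D)) := by
          rw [Finset.card_range, nsmul_eq_mul]
      _ ≤ (D:ℝ) * (lam 0 * (E^2 * R^D)) := by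
          apply mul_le_mul_of_nonneg_right _ hbodynn
          exact_mod_cast Nat.sub_le D 1
  calc (1:ℝ) = g 0 + g 1 + ∑ c ∈ Finset.range (D-1), g (c+1+1) := honeeq
    _ ≤ lam 0 + lam 0 * E + (D:ℝ) * (lam 0 * (E^2 * R^D)) :=
        add_le_add (add_le_add (le_of_eq hg0) hg1) hS
    _ = lam 0 * (1 + (E + D * E^2 * R^D)) := by ring

end Aux

set_option maxHeartbeats 1600000

/-- **Lemma `lemma:concentration`.**  Let `D ≥ 1` be the diameter of `G`, `δ = 1/(3D)`,
and fix `0 < ε̄ < δ/2`.  For all `β` (and `n`) large enough, the single-particle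
stationary probability `λ(0)` of the `Z` chain (with `p = 1/(e^{βδ}+Δ)` and
`q = e^{β(1−δ)−β/n}/(e^{β(1−δ)−β/n}+e^{βδ}+Δ−1)`) satisfies `λ(0) ≥ 1−δ+ε̄`; hence if
`Z(0) ~ Binomial(n, λ(0))` is the number of particles at `0` at stationarity, then
`𝔼[Z(0)] = n·λ(0) ≥ (1−δ+ε̄)n` and `ℙ(Z(0) ≤ (1−δ)n) ≤ 2·exp(−2 ε̄² n)`. -/
theorem z_chain_concentration {V : Type*} [Fintype V] [DecidableEq V]
    (G : SimpleGraph V) [DecidableRel G.Adj] (hG : G.Connected)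
    (D : ℕ) (hD1 : 1 ≤ D) (hDdiam : D = G.diam)
    (δ : ℝ) (hδ : δ = 1 / (3 * D))
    (ε : ℝ) (hε0 : 0 < ε) (hε : ε < δ / 2) :
    ∃ β₀ : ℝ, ∀ β : ℝ, β₀ ≤ β → ∃ N : ℕ, ∀ n : ℕ, N ≤ n →
      ∀ lam : Fin (D + 1) → ℝ,
        ((∀ e, 0 ≤ lam e) ∧ (∑ e, lam e = 1) ∧
          (∀ e, ∑ d, lam d *
            zsp D (1 / (Real.exp (β * δ) + G.maxDegree))
              (Real.exp (β * (1 - δ) - β / n) /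
                (Real.exp (β * (1 - δ) - β / n) + Real.exp (β * δ) + G.maxDegree - 1))
              d e = lam e)) →
        1 - δ + ε ≤ lam 0 ∧
        (1 - δ + ε) * n ≤ (n : ℝ) * lam 0 ∧
        (∑ m ∈ Finset.range (n + 1),
            if (m : ℝ) ≤ (1 - δ) * n then
              (n.choose m : ℝ) * lam 0 ^ m * (1 - lam 0) ^ (n - m)
            else 0)
          ≤ 2 * Real.exp (-2 * ε ^ 2 * n) := by
  have hD0 : (0:ℝ) < D := by exact_mod_cast hD1
  have hδ0 : 0 < δ := by rw [hδ]; positivity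
  have h1D : (1:ℝ) ≤ D := by exact_mod_cast hD1
  have hδ3 : δ ≤ 1/3 := by
    rw [hδ, div_le_div_iff₀ (by positivity) (by norm_num)]
    linarith
  have hδD : δ * D = 1/3 := by
    rw [hδ]; field_simp
  set Δr : ℝ := (G.maxDegree : ℝ) with hΔr
  have hΔ0 : 0 ≤ Δr := Nat.cast_nonneg _
  set η : ℝ := δ - 2*ε with hη
  have hη0 : 0 < η := by rw [hη]; linarith
  set C : ℝ := 4 + 16 * 2^D * D with hC
  have hC0 : 0 < C := by positivity
  refine ⟨(1/δ) * Real.log (Δr+1) + 3 * |Real.log (C/η)| + 1, fun β hβ => ?_⟩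
  have hlogΔnn : 0 ≤ Real.log (Δr+1) := Real.log_nonneg (by linarith)
  have hinvδnn : (0:ℝ) ≤ 1/δ := by positivity
  have habs : Real.log (C/η) ≤ |Real.log (C/η)| := le_abs_self _
  have habsnn : 0 ≤ |Real.log (C/η)| := abs_nonneg _
  have hβ1 : 1 ≤ β := by nlinarith [mul_nonneg hinvδnn hlogΔnn]
  have hβ0 : 0 < β := by linarith
  have hβδ : Real.log (Δr+1) ≤ β * δ := by
    have h1 : (1/δ) * Real.log (Δr+1) ≤ β := by nlinarith
    calc Real.log (Δr+1) = δ * ((1/δ) * Real.log (Δr+1)) := by field_simp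
      _ ≤ δ * β := mul_le_mul_of_nonneg_left h1 hδ0.le
      _ = β * δ := mul_comm _ _
  have hβC : Real.log (C/η) ≤ β / 3 := by
    have h1 : 3 * |Real.log (C/η)| ≤ β := by nlinarith [mul_nonneg hinvδnn hlogΔnn]
    linarith
  refine ⟨3 * ⌈β⌉₊ + 1, fun n hn lam hlam => ?_⟩
  obtain ⟨hpos, hsum, hsta⟩ := hlam
  have hceil : (β:ℝ) ≤ (⌈β⌉₊ : ℝ) := Nat.le_ceil β
  have hn3 : 3 * β + 1 ≤ (n:ℝ) := by
    have := (Nat.cast_le (α := ℝ)).mpr hn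
    push_cast at this
    linarith
  have hn0 : (0:ℝ) < n := by linarith
  have hβn : β / n ≤ 1/3 := by
    rw [div_le_div_iff₀ hn0 (by norm_num)]
    linarith
  set x : ℝ := Real.exp (β * δ) with hx
  have hx0 : 0 < x := Real.exp_pos _
  have hxΔ : Δr + 1 ≤ x := by
    rw [hx, show Δr + 1 = Real.exp (Real.log (Δr+1)) from (Real.exp_log (by linarith)).symm]
    exact Real.exp_le_exp.mpr hβδ
  set Y : ℝ := Real.exp (β * (1-δ) - β/n) with hY
  have hY0 : 0 < Y := Real.exp_pos _
  set p : ℝ := 1 / (x + Δr) with hp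
  set q : ℝ := Y / (Y + x + Δr - 1) with hq
  have hden0 : 0 < Y + x + Δr - 1 := by linarith
  have hp0 : 0 < p := by rw [hp]; exact div_pos one_pos (by linarith)
  have hp1 : p ≤ 1 := by rw [hp, div_le_one (by linarith)]; linarith
  have hq0 : 0 < q := by rw [hq]; exact div_pos hY0 hden0
  have hq1 : q ≤ 1 := by rw [hq, div_le_one hden0]; linarith
  have key := chain_bound hD1 hp0 hp1 hq0 hq1 hpos hsum hsta
  have hEeq : (1-q)/q = (x + Δr - 1)/Y := by
    rw [hq]
    field_simp
    ring
  have hE4 : (1-q)/q ≤ 4 * Real.exp (-(β/3)) := by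
    rw [hEeq]
    have hexp13 : Real.exp ((1:ℝ)/3) ≤ 2 := exp_third_le_two
    calc (x+Δr-1)/Y ≤ (2*x)/Y := (div_le_div_iff_of_pos_right hY0).mpr (by linarith)
        _ = 2 * Real.exp (β*δ - (β*(1-δ) - β/n)) := by
            rw [hx, hY, mul_div_assoc, ← Real.exp_sub]
        _ ≤ 2 * Real.exp (1/3 - β/3) := by
            apply mul_le_mul_of_nonneg_left _ (by norm_num)
            apply Real.exp_le_exp.mpr
            have h2d : β*(2*δ) ≤ β*(2/3) := mul_le_mul_of_nonneg_left (by linarith) hβ0.le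
            linarith
        _ = 2 * (Real.exp (1/3) * Real.exp (-(β/3))) := by
            rw [← Real.exp_add]
            congr 1
        _ ≤ 4 * Real.exp (-(β/3)) := by
            have h2 : Real.exp ((1:ℝ)/3) * Real.exp (-(β/3)) ≤ 2 * Real.exp (-(β/3)) :=
              mul_le_mul_of_nonneg_right hexp13 (Real.exp_pos _).le
            linarith
  have hRD : (1/p)^D ≤ 2^D * Real.exp (β/3) := by
    have h1p : 1/p = x + Δr := by rw [hp, one_div_one_div]
    have hxD : x^D = Real.exp (β/3) := by
      rw [hx, ← Real.exp_nat_mul]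
      congr 1
      rw [show (D:ℝ) * (β*δ) = β * (δ * D) by ring, hδD]
      ring
    calc (1/p)^D = (x+Δr)^D := by rw [h1p]
      _ ≤ (2*x)^D := pow_le_pow_left₀ (by linarith) (by linarith) D
      _ = 2^D * x^D := mul_pow 2 x D
      _ = 2^D * Real.exp (β/3) := by rw [hxD]
  have hEnn : 0 ≤ (1-q)/q := div_nonneg (by linarith) hq0.le
  have hRDnn : 0 ≤ (1/p)^D := pow_nonneg (div_nonneg zero_le_one hp0.le) D
  have hexpprod : Real.exp (-(β/3)) * Real.exp (β/3) = 1 := by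
    rw [← Real.exp_add]; norm_num
  have hKη : (1-q)/q + D * ((1-q)/q)^2 * (1/p)^D ≤ η := by
    have t2 : (D:ℝ) * ((1-q)/q)^2 * (1/p)^D
        ≤ (D:ℝ) * (4*Real.exp (-(β/3)))^2 * (2^D * Real.exp (β/3)) := by
      apply mul_le_mul _ hRD hRDnn _
      · exact mul_le_mul_of_nonneg_left (pow_le_pow_left₀ hEnn hE4 2) (Nat.cast_nonneg D)
      · positivity
    have t2' : (D:ℝ) * (4*Real.exp (-(β/3)))^2 * (2^D * Real.exp (β/3))
        = 16 * 2^D * D * Real.exp (-(β/3)) := by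
      linear_combination (16 * (2:ℝ)^D * (D:ℝ) * Real.exp (-(β/3))) * hexpprod
    have hCη : C * Real.exp (-(β/3)) ≤ η := by
      have h1 : C/η ≤ Real.exp (β/3) := by
        rw [show C/η = Real.exp (Real.log (C/η)) from (Real.exp_log (by positivity)).symm]
        exact Real.exp_le_exp.mpr hβC
      rw [Real.exp_neg, ← div_eq_mul_inv, div_le_iff₀ (Real.exp_pos _)]
      have h2 := (div_le_iff₀ hη0).mp h1
      linarith
    calc (1-q)/q + D * ((1-q)/q)^2 * (1/p)^D
        ≤ 4*Real.exp (-(β/3)) + 16 * 2^D * D * Real.exp (-(β/3)) := by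
          rw [← t2']; exact add_le_add hE4 t2
      _ = C * Real.exp (-(β/3)) := by rw [hC]; ring
      _ ≤ η := hCη
  have hl0le1 : lam 0 ≤ 1 := by
    rw [← hsum]
    exact Finset.single_le_sum (fun i _ => hpos i) (Finset.mem_univ 0)
  have hKnn : 0 ≤ (1-q)/q + D * ((1-q)/q)^2 * (1/p)^D := by
    have : 0 ≤ (D:ℝ) * ((1-q)/q)^2 * (1/p)^D :=
      mul_nonneg (mul_nonneg (Nat.cast_nonneg D) (sq_nonneg _)) hRDnn
    linarith
  have hlam0 : 1 - η ≤ lam 0 := by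
    set K : ℝ := (1-q)/q + D * ((1-q)/q)^2 * (1/p)^D with hKdef
    have hexpand : lam 0 * (1 + K) = lam 0 + lam 0 * K := by ring
    have hprod : lam 0 * K ≤ 1 * K := mul_le_mul_of_nonneg_right hl0le1 hKnn
    rw [hexpand] at key
    linarith
  have hlam0' : 1 - δ + 2*ε ≤ lam 0 := by rw [hη] at hlam0; linarith
  refine ⟨by linarith, ?_, ?_⟩
  · calc (1-δ+ε) * n ≤ lam 0 * n :=
        mul_le_mul_of_nonneg_right (by linarith) hn0.le
      _ = (n:ℝ) * lam 0 := mul_comm _ _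
  · have hch := chernoff n (1-δ) (lam 0) ε (by linarith) hl0le1 hε0 (by linarith)
      (by linarith)
    have hexp0 : 0 < Real.exp (-2*ε^2*n) := Real.exp_pos _
    linarith

end ARW
end

section
/- For the single-particle Markov chain on {0,1,…,D} with parameters 0 < p < q < 1 as described, the stationary probability of state 0 equals q when D = 1, and equals q·[1 + ((1−q)²/p)·(p/(1−p))^{2−D}·(1 − (p/(1−p))^{D−1})/(1 − p/(1−p))]^{−1} when D ≥ 2. -/
namespace ARW

open Finset

variable {V : Type*} [Fintype V] [DecidableEq V]

private lemma sum_two {n : ℕ} (f : Fin n → ℝ) (a b : Fin n) (hab : a ≠ b)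
    (h : ∀ d, d ≠ a → d ≠ b → f d = 0) : ∑ d, f d = f a + f b := by
  classical
  have hb : b ∈ Finset.univ.erase a :=
    Finset.mem_erase.mpr ⟨fun hba => hab hba.symm, Finset.mem_univ b⟩
  have h0 : ∑ d ∈ (Finset.univ.erase a).erase b, f d = 0 :=
    Finset.sum_eq_zero fun d hd => by
      rw [Finset.mem_erase, Finset.mem_erase] at hd
      exact h d hd.2.1 hd.1
  rw [← Finset.add_sum_erase _ f (Finset.mem_univ a), ← Finset.add_sum_erase _ f hb, h0, add_zero]

private lemma geo_flip {u v : ℝ} (m : ℕ) (huv : u * v = 1) (hv1 : v - 1 ≠ 0)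
    (hu1 : 1 - u ≠ 0) :
    (v ^ (m + 1) - 1) / (v - 1) = (u ^ m)⁻¹ * ((1 - u ^ (m + 1)) / (1 - u)) := by
  have hA : u ^ m * v ^ m = 1 := by rw [← mul_pow, huv, one_pow]
  have hA1 : u ^ (m + 1) * v ^ (m + 1) = 1 := by rw [← mul_pow, huv, one_pow]
  have hinv : (u ^ m)⁻¹ = v ^ m := inv_eq_of_mul_eq_one_right hA
  rw [hinv, ← mul_div_assoc, div_eq_div_iff hv1 hu1]
  linear_combination hA1 - v ^ m * huv - u * hA

/-- **Proposition `prop:stationary-probabilities`.**  For the single-particle chain on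
`{0,1,…,D}` with parameters `0 < p < q < 1` (and `p ≠ 1/2`), the stationary probability
of state `0` equals `q` when `D = 1`, and equals
`q·[1 + ((1−q)²/p)·(p/(1−p))^{2−D}·(1 − (p/(1−p))^{D−1})/(1 − p/(1−p))]⁻¹`
when `D ≥ 2`. -/
theorem z_single_particle_stationary (D : ℕ) (hD : 1 ≤ D)
    (p q : ℝ) (hp0 : 0 < p) (hpq : p < q) (hq1 : q < 1) (hphalf : p ≠ 1 / 2)
    (lam : Fin (D + 1) → ℝ) (hnn : ∀ e, 0 ≤ lam e) (hsum : ∑ e, lam e = 1)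
    (hstat : ∀ e, ∑ d, lam d * zsp D p q d e = lam e) :
    (D = 1 → lam 0 = q) ∧
    (2 ≤ D → lam 0 =
      q * (1 + ((1 - q) ^ 2 / p) * (p / (1 - p)) ^ ((2 : ℤ) - (D : ℤ)) *
        ((1 - (p / (1 - p)) ^ ((D : ℤ) - 1)) / (1 - p / (1 - p))))⁻¹) := by
  constructor
  · -- D = 1 case
    intro h1
    subst h1
    have h0 := hstat 0
    have hs2 : lam 0 + lam 1 = 1 := by
      rw [← hsum]
      simp [Fin.sum_univ_succ]
    simp [Fin.sum_univ_succ, zsp] at h0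
    linear_combination (-1 : ℝ) * h0 + q * hs2
  · -- D ≥ 2 case
    intro hD2
    obtain ⟨m, rfl⟩ : ∃ m, D = m + 2 := ⟨D - 2, by omega⟩
    clear hD hD2
    have hq0 : 0 < q := hp0.trans hpq
    have hp1 : p < 1 := hpq.trans hq1
    have hpne : p ≠ 0 := ne_of_gt hp0
    have h1pne : (1 : ℝ) - p ≠ 0 := ne_of_gt (by linarith)
    have hqne : q ≠ 0 := ne_of_gt hq0
    have h2p : 1 - 2 * p ≠ 0 := fun h => hphalf (by linarith)
    obtain ⟨L, hL⟩ : ∃ L : ℕ → ℝ, ∀ k (h : k < m + 2 + 1), L k = lam ⟨k, h⟩ :=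
      ⟨fun k => if h : k < m + 2 + 1 then lam ⟨k, h⟩ else 0, fun k h => dif_pos h⟩
    -- stationary equation at 0
    have e0 : L 0 * q + L 1 * q = L 0 := by
      have hz : ∀ d : Fin (m + 2 + 1), d ≠ ⟨0, by omega⟩ → d ≠ ⟨1, by omega⟩ →
          lam d * zsp (m + 2) p q d ⟨0, by omega⟩ = 0 := by
        intro d hd0 hd1
        have hv0 : (d : ℕ) ≠ 0 := fun h => hd0 (Fin.ext h)
        have hv1 : (d : ℕ) ≠ 1 := fun h => hd1 (Fin.ext h)
        have hzz : zsp (m + 2) p q d ⟨0, by omega⟩ = 0 := by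
          unfold zsp
          simp only [Fin.val_mk]
          split_ifs <;> first | ring1 | (exfalso; omega)
        rw [hzz, mul_zero]
      have hval := sum_two (fun d => lam d * zsp (m + 2) p q d ⟨0, by omega⟩)
        ⟨0, by omega⟩ ⟨1, by omega⟩ (by simp [Fin.ext_iff]) hz
      have h0 : lam ⟨0, by omega⟩ * zsp (m + 2) p q ⟨0, by omega⟩ ⟨0, by omega⟩
          + lam ⟨1, by omega⟩ * zsp (m + 2) p q ⟨1, by omega⟩ ⟨0, by omega⟩
          = lam ⟨0, by omega⟩ := hval.symm.trans (hstat ⟨0, by omega⟩)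
      have z00 : zsp (m + 2) p q ⟨0, by omega⟩ ⟨0, by omega⟩ = q := by
        unfold zsp
        simp only [Fin.val_mk]
        split_ifs <;> first | ring1 | (exfalso; omega)
      have z10 : zsp (m + 2) p q ⟨1, by omega⟩ ⟨0, by omega⟩ = q := by
        unfold zsp
        simp only [Fin.val_mk]
        split_ifs <;> first | ring1 | (exfalso; omega)
      rw [z00, z10, ← hL 0 (by omega), ← hL 1 (by omega)] at h0
      exact h0
    -- stationary equation at 1 ≤ k < m+2
    have ek : ∀ k, 1 ≤ k → k < m + 2 →
        L k = (if k ≤ 2 then 1 - q else 1 - p) * L (k - 1) + p * L (k + 1) := by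
      intro k hk1 hk2
      have hz : ∀ d : Fin (m + 2 + 1), d ≠ ⟨k - 1, by omega⟩ → d ≠ ⟨k + 1, by omega⟩ →
          lam d * zsp (m + 2) p q d ⟨k, by omega⟩ = 0 := by
        intro d hd0 hd1
        have hv0 : (d : ℕ) ≠ k - 1 := fun h => hd0 (Fin.ext h)
        have hv1 : (d : ℕ) ≠ k + 1 := fun h => hd1 (Fin.ext h)
        have hzz : zsp (m + 2) p q d ⟨k, by omega⟩ = 0 := by
          unfold zsp
          simp only [Fin.val_mk]
          split_ifs <;> first | ring1 | (exfalso; omega)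
        rw [hzz, mul_zero]
      have hval := sum_two (fun d => lam d * zsp (m + 2) p q d ⟨k, by omega⟩)
        ⟨k - 1, by omega⟩ ⟨k + 1, by omega⟩ (by simp only [ne_eq, Fin.mk.injEq]; omega) hz
      have h0 : lam ⟨k - 1, by omega⟩ * zsp (m + 2) p q ⟨k - 1, by omega⟩ ⟨k, by omega⟩
          + lam ⟨k + 1, by omega⟩ * zsp (m + 2) p q ⟨k + 1, by omega⟩ ⟨k, by omega⟩
          = lam ⟨k, by omega⟩ := hval.symm.trans (hstat ⟨k, by omega⟩)
      have za : zsp (m + 2) p q ⟨k - 1, by omega⟩ ⟨k, by omega⟩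
          = if k ≤ 2 then 1 - q else 1 - p := by
        unfold zsp
        simp only [Fin.val_mk]
        split_ifs <;> first | ring1 | (exfalso; omega)
      have zb : zsp (m + 2) p q ⟨k + 1, by omega⟩ ⟨k, by omega⟩ = p := by
        unfold zsp
        simp only [Fin.val_mk]
        split_ifs <;> first | ring1 | (exfalso; omega)
      rw [za, zb, ← hL (k - 1) (by omega), ← hL (k + 1) (by omega), ← hL k (by omega)] at h0
      linarith [h0]
    -- flows
    have f0 : (1 - q) * L 0 = q * L 1 := by linarith [e0]
    have f1 : (1 - q) * L 1 = p * L 2 := by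
      have e1 := ek 1 (by omega) (by omega)
      rw [if_pos (by omega)] at e1
      norm_num at e1
      linarith [e1, f0]
    have fk : ∀ k, 2 ≤ k → k < m + 2 → (1 - p) * L k = p * L (k + 1) := by
      intro k hk2
      induction k, hk2 using Nat.le_induction with
      | base =>
        intro h2m
        have e := ek 2 (by omega) h2m
        rw [if_pos (by omega)] at e
        norm_num at e
        linarith [e, f1]
      | succ k hk ih =>
        intro hkm
        have e := ek (k + 1) (by omega) hkm
        rw [if_neg (by omega)] at e
        have hkk : k + 1 - 1 = k := by omega
        rw [hkk] at e
        have ihh := ih (by omega)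
        linarith [e, ihh]
    -- geometric form
    have form : ∀ j, j ≤ m → L (j + 2) = L 2 * ((1 - p) / p) ^ j := by
      intro j
      induction j with
      | zero => intro _; norm_num
      | succ j ih =>
        intro hj
        have hf := fk (j + 2) (by omega) (by omega)
        have hstep : L (j + 1 + 2) = ((1 - p) / p) * L (j + 2) := by
          rw [div_mul_eq_mul_div, eq_div_iff hpne]
          have hr : L (j + 1 + 2) = L (j + 2 + 1) := rfl
          rw [hr]
          linarith [hf]
        rw [hstep, ih (by omega)]
        ring
    -- sum over all states
    have hsum' : ∑ k ∈ Finset.range (m + 2 + 1), L k = 1 := by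
      rw [← hsum, ← Fin.sum_univ_eq_sum_range L (m + 2 + 1)]
      refine Finset.sum_congr rfl fun i _ => ?_
      rw [hL i.val i.isLt]
    have hsplit : L 0 + L 1 + ∑ j ∈ Finset.range (m + 1), L (j + 2) = 1 := by
      have e : ∑ k ∈ Finset.range (m + 2 + 1), L k
          = L 0 + L 1 + ∑ j ∈ Finset.range (m + 1), L (j + 2) := by
        rw [Finset.sum_range_succ', Finset.sum_range_succ']
        have h1 : ∀ i, L (i + 1 + 1) = L (i + 2) := fun i => rfl
        have h2 : L (0 + 1) = L 1 := rfl
        simp only [h1, h2]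
        ring
      rw [e] at hsum'
      exact hsum'
    have hgeo : ∑ j ∈ Finset.range (m + 1), L (j + 2)
        = L 2 * ∑ j ∈ Finset.range (m + 1), ((1 - p) / p) ^ j := by
      rw [Finset.mul_sum]
      refine Finset.sum_congr rfl fun j hj => ?_
      rw [Finset.mem_range] at hj
      exact form j (by omega)
    have hs1 : (1 - p) / p ≠ 1 := by
      intro h
      rw [div_eq_one_iff_eq hpne] at h
      exact h2p (by linarith)
    have hgs : ∑ j ∈ Finset.range (m + 1), ((1 - p) / p) ^ j
        = (((1 - p) / p) ^ (m + 1) - 1) / ((1 - p) / p - 1) := geom_sum_eq hs1 (m + 1)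
    rw [hgeo, hgs] at hsplit
    -- linear relations
    have hL1 : L 1 * q = (1 - q) * L 0 := by linarith [f0]
    have hL2 : L 2 * (q * p) = (1 - q) ^ 2 * L 0 := by
      linear_combination (-q) * f1 + (-(1 - q)) * f0
    -- nonvanishing facts
    have hrne : p / (1 - p) ≠ 0 := div_ne_zero hpne h1pne
    have hrm : (p / (1 - p)) ^ m ≠ 0 := pow_ne_zero m hrne
    have hr1 : 1 - p / (1 - p) ≠ 0 := by
      rw [sub_ne_zero]
      intro h
      rw [eq_div_iff h1pne] at h
      exact h2p (by linarith)
    have hsne : (1 - p) / p - 1 ≠ 0 := sub_ne_zero.mpr hs1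
    have hB : (p / (1 - p)) * ((1 - p) / p) = 1 := by field_simp
    have hGB : (((1 - p) / p) ^ (m + 1) - 1) / ((1 - p) / p - 1)
        = ((p / (1 - p)) ^ m)⁻¹ * ((1 - (p / (1 - p)) ^ (m + 1)) / (1 - p / (1 - p))) :=
      geo_flip m hB hsne hr1
    rw [hGB] at hsplit
    have hlam0 : lam 0 = L 0 := by
      have h00 : (0 : Fin (m + 2 + 1)) = ⟨0, by omega⟩ := by
        apply Fin.ext
        simp
      rw [h00]
      exact (hL 0 (by omega)).symm
    have hz1 : (p / (1 - p)) ^ ((2 : ℤ) - ((m + 2 : ℕ) : ℤ)) = ((p / (1 - p)) ^ m)⁻¹ := by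
      rw [show (2 : ℤ) - ((m + 2 : ℕ) : ℤ) = -(m : ℤ) by push_cast; ring, zpow_neg, zpow_natCast]
    have hz2 : (p / (1 - p)) ^ (((m + 2 : ℕ) : ℤ) - 1) = (p / (1 - p)) ^ (m + 1) := by
      rw [show ((m + 2 : ℕ) : ℤ) - 1 = ((m + 1 : ℕ) : ℤ) by push_cast; ring, zpow_natCast]
    have hLB : L 0 * (1 + (1 - q) ^ 2 / p * ((p / (1 - p)) ^ m)⁻¹ *
        ((1 - (p / (1 - p)) ^ (m + 1)) / (1 - p / (1 - p)))) = q := by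
      rw [mul_assoc ((1 - q) ^ 2 / p)]
      generalize ((p / (1 - p)) ^ m)⁻¹ * ((1 - (p / (1 - p)) ^ (m + 1)) / (1 - p / (1 - p))) = T
        at hsplit ⊢
      field_simp
      linear_combination q * p * hsplit - p * hL1 - T * hL2
    have hBne : (1 + (1 - q) ^ 2 / p * ((p / (1 - p)) ^ m)⁻¹ *
        ((1 - (p / (1 - p)) ^ (m + 1)) / (1 - p / (1 - p)))) ≠ 0 := by
      intro h
      rw [h, mul_zero] at hLB
      exact hqne hLB.symm
    rw [hlam0, hz1, hz2, eq_mul_inv_iff_mul_eq₀ hBne]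
    exact hLB


end ARW
end

section
/- Let Q be the transition matrix on the vertices of a simple connected graph 𝒢 in which from vertex i the walk stays at i or moves to each neighbor of i, each with probability 1/(deg(i)+1). For vertices x, y let d(x,y) be the expected meeting time of two independent copies of this random walk started from x and y (the walks move simultaneously and independently until they first occupy the same vertex). Then d is a metric on the vertex set, and Q contracts the associated Wasserstein distance: for all x ≠ y, W_d^Q(x,y) ≤ (1 − 1/d_max)·d(x,y), where d_max = max_{x,y} d(x,y). Moreover, if x ~ y then W_d^Q(x,y) ≤ (1 − 1/d'_max)·d(x,y), where d'_max = max_{x~y} d(x,y). -/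
namespace ARW

open Finset

variable {V : Type*} [Fintype V] [DecidableEq V]

/-- The lazy simple random walk on `G`: from `i`, stay at `i` or move to each neighbor,
each with probability `1/(deg(i)+1)`. -/
noncomputable def lazySRW (G : SimpleGraph V) [DecidableRel G.Adj] (i j : V) : ℝ :=
  if G.Adj i j ∨ i = j then 1 / (G.degree i + 1) else 0

/-- The Wasserstein distance `W_d^Q(x,y)`: the infimum of `𝔼[d(X₁,Y₁)]` over couplings
`K` of `X₁ ~ Q(x,·)` and `Y₁ ~ Q(y,·)`. -/
noncomputable def wass {S : Type*} [Fintype S] (Q : S → S → ℝ) (d : S → S → ℝ)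
    (x y : S) : ℝ :=
  sInf {w : ℝ | ∃ K : S → S → ℝ, (∀ a b, 0 ≤ K a b) ∧
    (∀ a, ∑ b, K a b = Q x a) ∧ (∀ b, ∑ a, K a b = Q y b) ∧
    w = ∑ a, ∑ b, K a b * d a b}

section AuxLemmas

set_option linter.unusedSectionVars false

lemma lazySRW_nonneg (G : SimpleGraph V) [DecidableRel G.Adj] (i j : V) :
    0 ≤ lazySRW G i j := by
  unfold lazySRW; split <;> positivity

lemma lazySRW_self_pos (G : SimpleGraph V) [DecidableRel G.Adj] (i : V) :
    0 < lazySRW G i i := by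
  simp only [lazySRW, or_true, if_true]
  positivity

lemma lazySRW_adj_pos (G : SimpleGraph V) [DecidableRel G.Adj] {i j : V} (h : G.Adj i j) :
    0 < lazySRW G i j := by
  simp only [lazySRW, h, true_or, if_true]
  positivity

lemma lazySRW_row (G : SimpleGraph V) [DecidableRel G.Adj] (i : V) :
    ∑ j, lazySRW G i j = 1 := by
  unfold lazySRW
  rw [Finset.sum_ite, Finset.sum_const, Finset.sum_const_zero, add_zero]
  have h1 : (Finset.univ.filter (fun j => G.Adj i j ∨ i = j)) = insert i (G.neighborFinset i) := by
    ext j; simp [SimpleGraph.mem_neighborFinset, or_comm, eq_comm]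
  rw [h1, Finset.card_insert_of_notMem (by simp), SimpleGraph.card_neighborFinset_eq_degree]
  have : (0:ℝ) < (G.degree i : ℝ) + 1 := by positivity
  rw [nsmul_eq_mul]; push_cast
  field_simp

/-- weighted average of a constant -/
lemma wavg_const (Q : V → V → ℝ) (hrow : ∀ i, ∑ j, Q i j = 1) (x y : V) (c : ℝ) :
    ∑ a, ∑ b, Q x a * Q y b * c = c := by
  calc ∑ a, ∑ b, Q x a * Q y b * c = ∑ a, Q x a * ((∑ b, Q y b) * c) := by
        refine Finset.sum_congr rfl fun a _ => ?_
        rw [Finset.sum_mul, Finset.mul_sum]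
        exact Finset.sum_congr rfl fun b _ => by ring
    _ = c := by
        rw [hrow y, one_mul, ← Finset.sum_mul, hrow x, one_mul]

lemma wavg_le (Q : V → V → ℝ) (hQ0 : ∀ i j, 0 ≤ Q i j) (hrow : ∀ i, ∑ j, Q i j = 1)
    (x y : V) (g : V → V → ℝ) (M : ℝ) (h : ∀ a b, g a b ≤ M) :
    ∑ a, ∑ b, Q x a * Q y b * g a b ≤ M := by
  calc ∑ a, ∑ b, Q x a * Q y b * g a b ≤ ∑ a, ∑ b, Q x a * Q y b * M := by
        refine Finset.sum_le_sum fun a _ => Finset.sum_le_sum fun b _ => ?_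
        exact mul_le_mul_of_nonneg_left (h a b) (mul_nonneg (hQ0 x a) (hQ0 y b))
    _ = M := wavg_const Q hrow x y M

lemma wavg_ge (Q : V → V → ℝ) (hQ0 : ∀ i j, 0 ≤ Q i j) (hrow : ∀ i, ∑ j, Q i j = 1)
    (x y : V) (g : V → V → ℝ) (m : ℝ) (h : ∀ a b, m ≤ g a b) :
    m ≤ ∑ a, ∑ b, Q x a * Q y b * g a b := by
  calc m = ∑ a, ∑ b, Q x a * Q y b * m := (wavg_const Q hrow x y m).symm
    _ ≤ ∑ a, ∑ b, Q x a * Q y b * g a b := by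
        refine Finset.sum_le_sum fun a _ => Finset.sum_le_sum fun b _ => ?_
        exact mul_le_mul_of_nonneg_left (h a b) (mul_nonneg (hQ0 x a) (hQ0 y b))

lemma expand3_mid (Q : V → V → ℝ) (hrow : ∀ i, ∑ j, Q i j = 1) (x y z : V) (g : V → V → ℝ) :
    ∑ a, ∑ b, ∑ c, Q x a * Q y b * Q z c * g a c = ∑ a, ∑ c, Q x a * Q z c * g a c := by
  refine Finset.sum_congr rfl fun a _ => ?_
  calc ∑ b, ∑ c, Q x a * Q y b * Q z c * g a c
      = ∑ b, Q y b * (∑ c, Q x a * Q z c * g a c) := by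
        refine Finset.sum_congr rfl fun b _ => ?_
        rw [Finset.mul_sum]; exact Finset.sum_congr rfl fun c _ => by ring
    _ = ∑ c, Q x a * Q z c * g a c := by rw [← Finset.sum_mul, hrow y, one_mul]

lemma expand3_last (Q : V → V → ℝ) (hrow : ∀ i, ∑ j, Q i j = 1) (x y z : V) (g : V → V → ℝ) :
    ∑ a, ∑ b, ∑ c, Q x a * Q y b * Q z c * g a b = ∑ a, ∑ b, Q x a * Q y b * g a b := by
  refine Finset.sum_congr rfl fun a _ => Finset.sum_congr rfl fun b _ => ?_
  calc ∑ c, Q x a * Q y b * Q z c * g a b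
      = (∑ c, Q z c) * (Q x a * Q y b * g a b) := by
        rw [Finset.sum_mul]; exact Finset.sum_congr rfl fun c _ => by ring
    _ = Q x a * Q y b * g a b := by rw [hrow z, one_mul]

lemma expand3_first (Q : V → V → ℝ) (hrow : ∀ i, ∑ j, Q i j = 1) (x y z : V) (g : V → V → ℝ) :
    ∑ a, ∑ b, ∑ c, Q x a * Q y b * Q z c * g b c = ∑ b, ∑ c, Q y b * Q z c * g b c := by
  calc ∑ a, ∑ b, ∑ c, Q x a * Q y b * Q z c * g b c
      = ∑ a, Q x a * (∑ b, ∑ c, Q y b * Q z c * g b c) := by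
        refine Finset.sum_congr rfl fun a _ => ?_
        rw [Finset.mul_sum]
        refine Finset.sum_congr rfl fun b _ => ?_
        rw [Finset.mul_sum]
        exact Finset.sum_congr rfl fun c _ => by ring
    _ = ∑ b, ∑ c, Q y b * Q z c * g b c := by rw [← Finset.sum_mul, hrow x, one_mul]

lemma wavg3_le (Q : V → V → ℝ) (hQ0 : ∀ i j, 0 ≤ Q i j) (hrow : ∀ i, ∑ j, Q i j = 1)
    (x y z : V) (g : V → V → V → ℝ) (M : ℝ) (h : ∀ a b c, g a b c ≤ M) :
    ∑ a, ∑ b, ∑ c, Q x a * Q y b * Q z c * g a b c ≤ M := by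
  calc ∑ a, ∑ b, ∑ c, Q x a * Q y b * Q z c * g a b c
      ≤ ∑ a, ∑ b, ∑ c, Q x a * Q y b * Q z c * M := by
        refine Finset.sum_le_sum fun a _ => Finset.sum_le_sum fun b _ =>
          Finset.sum_le_sum fun c _ => ?_
        exact mul_le_mul_of_nonneg_left (h a b c)
          (mul_nonneg (mul_nonneg (hQ0 x a) (hQ0 y b)) (hQ0 z c))
    _ = M := by
        rw [expand3_last Q hrow x y z (fun _ _ => M)]
        exact wavg_const Q hrow x y M

end AuxLemmas

/-- **Lemma `single-RW`.**  Let `Q` be the lazy simple random walk on a connected graph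
`G` and let `d(x,y)` be the expected meeting time of two independent copies of the walk
started from `x` and `y` (characterized by `d(x,x) = 0` and
`d(x,y) = 1 + Σ_{a,b} Q(x,a)Q(y,b)d(a,b)` for `x ≠ y`).  Then `d` is a metric, and `Q`
contracts the associated Wasserstein distance: `W_d^Q(x,y) ≤ (1 − 1/d_max)·d(x,y)` for
all `x ≠ y`, where `d_max = max_{x,y} d(x,y)`; moreover if `x ~ y` then
`W_d^Q(x,y) ≤ (1 − 1/d'_max)·d(x,y)` where `d'_max = max_{x~y} d(x,y)`. -/
theorem meeting_time_metric_contraction {V : Type*} [Fintype V] [DecidableEq V]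
    (G : SimpleGraph V) [DecidableRel G.Adj] (hG : G.Connected)
    (d : V → V → ℝ) (hd0 : ∀ x, d x x = 0)
    (hrec : ∀ x y, x ≠ y →
      d x y = 1 + ∑ a, ∑ b, lazySRW G x a * lazySRW G y b * d a b) :
    (∀ x y, 0 ≤ d x y) ∧
    (∀ x y, d x y = 0 ↔ x = y) ∧
    (∀ x y, d x y = d y x) ∧
    (∀ x y z, d x z ≤ d x y + d y z) ∧
    (∀ x y, x ≠ y →
      wass (lazySRW G) d x y ≤ (1 - 1 / (⨆ a : V, ⨆ b : V, d a b)) * d x y) ∧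
    (∀ x y, G.Adj x y →
      wass (lazySRW G) d x y ≤
        (1 - 1 / sSup {r : ℝ | ∃ a b, G.Adj a b ∧ r = d a b}) * d x y) := by
  have hne : Nonempty V := hG.nonempty
  have hQ0 : ∀ i j, 0 ≤ lazySRW G i j := lazySRW_nonneg G
  have hrow : ∀ i, ∑ j, lazySRW G i j = 1 := lazySRW_row G
  obtain ⟨v0⟩ := hne
  -- nonnegativity
  have hnonneg : ∀ x y, 0 ≤ d x y := by
    obtain ⟨p, -, hp⟩ := Finset.exists_min_image (Finset.univ : Finset (V × V))
      (fun p => d p.1 p.2) ⟨(v0, v0), Finset.mem_univ _⟩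
    have hmle : ∀ a b, d p.1 p.2 ≤ d a b := fun a b => hp (a, b) (Finset.mem_univ _)
    have hm0 : 0 ≤ d p.1 p.2 := by
      by_contra hneg
      push_neg at hneg
      have hne' : p.1 ≠ p.2 := by
        intro h
        rw [h, hd0] at hneg
        exact lt_irrefl 0 hneg
      have h1 := hrec p.1 p.2 hne'
      have h2 := wavg_ge (lazySRW G) hQ0 hrow p.1 p.2 d (d p.1 p.2) hmle
      linarith
    exact fun x y => le_trans hm0 (hmle x y)
  -- off-diagonal values are ≥ 1
  have hone : ∀ x y, x ≠ y → 1 ≤ d x y := by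
    intro x y h
    rw [hrec x y h]
    have := wavg_ge (lazySRW G) hQ0 hrow x y d 0 (fun a b => hnonneg a b)
    linarith
  -- zero iff diagonal
  have hiff : ∀ x y, d x y = 0 ↔ x = y := by
    intro x y
    constructor
    · intro h
      by_contra hne'
      have := hone x y hne'
      linarith
    · rintro rfl; exact hd0 x
  -- homogeneous recursion for the antisymmetry defect
  have hrecE : ∀ x y, x ≠ y →
      d x y - d y x = ∑ a, ∑ b, lazySRW G x a * lazySRW G y b * (d a b - d b a) := by
    intro x y hxy
    have h1 := hrec x y hxy
    have h2 := hrec y x (Ne.symm hxy)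
    have h3 : ∑ a, ∑ b, lazySRW G y a * lazySRW G x b * d a b
        = ∑ a, ∑ b, lazySRW G x a * lazySRW G y b * d b a := by
      rw [Finset.sum_comm]
      exact Finset.sum_congr rfl fun a _ => Finset.sum_congr rfl fun b _ => by ring
    have h4 : (∑ a, ∑ b, lazySRW G x a * lazySRW G y b * d a b)
        - (∑ a, ∑ b, lazySRW G x a * lazySRW G y b * d b a)
        = ∑ a, ∑ b, lazySRW G x a * lazySRW G y b * (d a b - d b a) := by
      rw [← Finset.sum_sub_distrib]
      refine Finset.sum_congr rfl fun a _ => ?_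
      rw [← Finset.sum_sub_distrib]
      exact Finset.sum_congr rfl fun b _ => by ring
    rw [h3] at h2
    rw [h1, h2]
    linarith [h4]
  -- symmetry
  have hsymm_le : ∀ x y, d x y - d y x ≤ 0 := by
    obtain ⟨q, -, hq⟩ := Finset.exists_max_image (Finset.univ : Finset (V × V))
      (fun p => d p.1 p.2 - d p.2 p.1) ⟨(v0, v0), Finset.mem_univ _⟩
    set M := d q.1 q.2 - d q.2 q.1 with hMdef
    have hM : ∀ a b, d a b - d b a ≤ M := fun a b => hq (a, b) (Finset.mem_univ _)
    suffices hM0 : M ≤ 0 by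
      intro x y; exact le_trans (hM x y) hM0
    by_contra hpos
    push_neg at hpos
    have step : ∀ u v, d u v - d v u = M → ∀ a, G.Adj u a → d a v - d v a = M := by
      intro u v huv a hadj
      have hune : u ≠ v := by
        rintro rfl
        rw [sub_self] at huv
        linarith
      have hE := hrecE u v hune
      have ht0 : ∀ a b, 0 ≤ lazySRW G u a * lazySRW G v b * (M - (d a b - d b a)) :=
        fun a b => mul_nonneg (mul_nonneg (hQ0 u a) (hQ0 v b)) (by linarith [hM a b])
      have htsum : ∑ a, ∑ b, lazySRW G u a * lazySRW G v b * (M - (d a b - d b a)) = 0 := by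
        have hc : ∑ a, ∑ b, lazySRW G u a * lazySRW G v b * M = M :=
          wavg_const (lazySRW G) hrow u v M
        have hsplit : ∑ a, ∑ b, lazySRW G u a * lazySRW G v b * (M - (d a b - d b a))
            = (∑ a, ∑ b, lazySRW G u a * lazySRW G v b * M)
              - ∑ a, ∑ b, lazySRW G u a * lazySRW G v b * (d a b - d b a) := by
          rw [← Finset.sum_sub_distrib]
          refine Finset.sum_congr rfl fun a _ => ?_
          rw [← Finset.sum_sub_distrib]
          exact Finset.sum_congr rfl fun b _ => by ring
        rw [hsplit, hc, ← hE, huv, sub_self]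
      have h1 : lazySRW G u a * lazySRW G v v * (M - (d a v - d v a))
          ≤ ∑ b, lazySRW G u a * lazySRW G v b * (M - (d a b - d b a)) :=
        Finset.single_le_sum (fun b _ => ht0 a b) (Finset.mem_univ v)
      have h2 : (∑ b, lazySRW G u a * lazySRW G v b * (M - (d a b - d b a)))
          ≤ ∑ a', ∑ b, lazySRW G u a' * lazySRW G v b * (M - (d a' b - d b a')) :=
        Finset.single_le_sum (f := fun a' => ∑ b, lazySRW G u a' * lazySRW G v b * (M - (d a' b - d b a')))
          (fun a' _ => Finset.sum_nonneg fun b _ => ht0 a' b) (Finset.mem_univ a)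
      have h3 : lazySRW G u a * lazySRW G v v * (M - (d a v - d v a)) = 0 :=
        le_antisymm (by rw [htsum] at h2; linarith) (ht0 a v)
      have hQpos : (0:ℝ) < lazySRW G u a * lazySRW G v v :=
        mul_pos (lazySRW_adj_pos G hadj) (lazySRW_self_pos G v)
      have h5 : M - (d a v - d v a) = 0 := by
        rcases mul_eq_zero.mp h3 with h | h
        · exact absurd h hQpos.ne'
        · exact h
      linarith
    have walkstep : ∀ (x y : V) (p : G.Walk x y), d x y - d y x = M → d y y - d y y = M := by
      intro x y p
      induction p with
      | nil => intro h; exact h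
      | cons hadj q ih => intro h; exact ih (step _ _ h _ hadj)
    obtain ⟨w⟩ := hG.preconnected q.1 q.2
    have hend := walkstep q.1 q.2 w rfl
    rw [sub_self] at hend
    linarith
  have hsym : ∀ x y, d x y = d y x := fun x y =>
    le_antisymm (by linarith [hsymm_le x y]) (by linarith [hsymm_le y x])
  -- triangle inequality
  have htri : ∀ x y z, d x z ≤ d x y + d y z := by
    obtain ⟨p, -, hp⟩ := Finset.exists_max_image (Finset.univ : Finset (V × V × V))
      (fun p => d p.1 p.2.2 - d p.1 p.2.1 - d p.2.1 p.2.2) ⟨(v0, v0, v0), Finset.mem_univ _⟩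
    obtain ⟨x, y, z⟩ := p
    set M := d x z - d x y - d y z with hMdef
    have hM : ∀ a b c, d a c - d a b - d b c ≤ M := fun a b c => hp (a, b, c) (Finset.mem_univ _)
    suffices hM0 : M ≤ 0 by
      intro x y z; have := hM x y z; linarith
    by_contra hpos
    push_neg at hpos
    rcases eq_or_ne x y with rfl | hxy
    · rw [hMdef, hd0] at hpos; linarith
    rcases eq_or_ne y z with rfl | hyz
    · rw [hMdef, hd0] at hpos; linarith
    rcases eq_or_ne x z with rfl | hxz
    · rw [hMdef, hd0] at hpos
      have := hnonneg x y
      have := hnonneg y x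
      linarith
    have e1 := hrec x z hxz
    have e2 := hrec x y hxy
    have e3 := hrec y z hyz
    have E1 : ∑ a, ∑ c, lazySRW G x a * lazySRW G z c * d a c
        = ∑ a, ∑ b, ∑ c, lazySRW G x a * lazySRW G y b * lazySRW G z c * d a c :=
      (expand3_mid (lazySRW G) hrow x y z d).symm
    have E2 : ∑ a, ∑ b, lazySRW G x a * lazySRW G y b * d a b
        = ∑ a, ∑ b, ∑ c, lazySRW G x a * lazySRW G y b * lazySRW G z c * d a b :=
      (expand3_last (lazySRW G) hrow x y z d).symm
    have E3 : ∑ b, ∑ c, lazySRW G y b * lazySRW G z c * d b c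
        = ∑ a, ∑ b, ∑ c, lazySRW G x a * lazySRW G y b * lazySRW G z c * d b c :=
      (expand3_first (lazySRW G) hrow x y z d).symm
    have hcomb : (∑ a, ∑ b, ∑ c, lazySRW G x a * lazySRW G y b * lazySRW G z c * d a c)
        - (∑ a, ∑ b, ∑ c, lazySRW G x a * lazySRW G y b * lazySRW G z c * d a b)
        - (∑ a, ∑ b, ∑ c, lazySRW G x a * lazySRW G y b * lazySRW G z c * d b c)
        = ∑ a, ∑ b, ∑ c, lazySRW G x a * lazySRW G y b * lazySRW G z c
            * (d a c - d a b - d b c) := by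
      rw [← Finset.sum_sub_distrib, ← Finset.sum_sub_distrib]
      refine Finset.sum_congr rfl fun a _ => ?_
      rw [← Finset.sum_sub_distrib, ← Finset.sum_sub_distrib]
      refine Finset.sum_congr rfl fun b _ => ?_
      rw [← Finset.sum_sub_distrib, ← Finset.sum_sub_distrib]
      exact Finset.sum_congr rfl fun c _ => by ring
    have hle : ∑ a, ∑ b, ∑ c, lazySRW G x a * lazySRW G y b * lazySRW G z c
        * (d a c - d a b - d b c) ≤ M :=
      wavg3_le (lazySRW G) hQ0 hrow x y z _ M (fun a b c => hM a b c)
    have : M = -1 + ((∑ a, ∑ b, ∑ c, lazySRW G x a * lazySRW G y b * lazySRW G z c * d a c)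
        - (∑ a, ∑ b, ∑ c, lazySRW G x a * lazySRW G y b * lazySRW G z c * d a b)
        - (∑ a, ∑ b, ∑ c, lazySRW G x a * lazySRW G y b * lazySRW G z c * d b c)) := by
      rw [hMdef, e1, e2, e3, E1, E2, E3]; ring
    rw [hcomb] at this
    linarith
  -- the Wasserstein distance is at most d x y - 1
  have hwassle : ∀ x y, x ≠ y → wass (lazySRW G) d x y ≤ d x y - 1 := by
    intro x y hxy
    have hbdd : BddBelow {w : ℝ | ∃ K : V → V → ℝ, (∀ a b, 0 ≤ K a b) ∧
        (∀ a, ∑ b, K a b = lazySRW G x a) ∧ (∀ b, ∑ a, K a b = lazySRW G y b) ∧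
        w = ∑ a, ∑ b, K a b * d a b} := by
      refine ⟨0, fun w hw => ?_⟩
      obtain ⟨K, hK0, -, -, hweq⟩ := hw
      rw [hweq]
      exact Finset.sum_nonneg fun a _ => Finset.sum_nonneg fun b _ =>
        mul_nonneg (hK0 a b) (hnonneg a b)
    have hmem : (d x y - 1) ∈ {w : ℝ | ∃ K : V → V → ℝ, (∀ a b, 0 ≤ K a b) ∧
        (∀ a, ∑ b, K a b = lazySRW G x a) ∧ (∀ b, ∑ a, K a b = lazySRW G y b) ∧
        w = ∑ a, ∑ b, K a b * d a b} := by
      refine ⟨fun a b => lazySRW G x a * lazySRW G y b, ?_, ?_, ?_, ?_⟩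
      · exact fun a b => mul_nonneg (hQ0 x a) (hQ0 y b)
      · intro a; rw [← Finset.mul_sum, hrow y, mul_one]
      · intro b; rw [← Finset.sum_mul, hrow x, one_mul]
      · have := hrec x y hxy; linarith
    exact csInf_le hbdd hmem
  refine ⟨hnonneg, hiff, hsym, htri, ?_, ?_⟩
  · -- contraction with global max
    intro x y hxy
    set M := ⨆ a : V, ⨆ b : V, d a b with hMdef
    have hub : ∀ u v, d u v ≤ M := by
      intro u v
      have h1 : d u v ≤ ⨆ b, d u b :=
        le_ciSup (Set.Finite.bddAbove (Set.finite_range _)) v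
      have h2 : (⨆ b, d u b) ≤ M :=
        le_ciSup (Set.Finite.bddAbove (Set.finite_range (fun a => ⨆ b, d a b))) u
      linarith
    have h1 : 1 ≤ d x y := hone x y hxy
    have hD : d x y ≤ M := hub x y
    have hMpos : (0:ℝ) < M := by linarith
    have hw := hwassle x y hxy
    have h2 : d x y / M ≤ 1 := (div_le_one hMpos).mpr hD
    have h3 : (1 - 1 / M) * d x y = d x y - d x y / M := by ring
    linarith
  · -- contraction with max over edges
    intro x y hadj
    have hxy : x ≠ y := hadj.ne
    set S := {r : ℝ | ∃ a b, G.Adj a b ∧ r = d a b} with hSdef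
    have hsub : S ⊆ Set.range (fun p : V × V => d p.1 p.2) := by
      rintro r ⟨a, b, -, rfl⟩
      exact ⟨(a, b), rfl⟩
    have hbdd : BddAbove S := ((Set.finite_range _).subset hsub).bddAbove
    have hmem : d x y ∈ S := ⟨x, y, hadj, rfl⟩
    have hD : d x y ≤ sSup S := le_csSup hbdd hmem
    have h1 : 1 ≤ d x y := hone x y hxy
    have hMpos : (0:ℝ) < sSup S := by linarith
    have hw := hwassle x y hxy
    have h2 : d x y / sSup S ≤ 1 := (div_le_one hMpos).mpr hD
    have h3 : (1 - 1 / sSup S) * d x y = d x y - d x y / sSup S := by ring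
    linarith

end ARW
end

section
/- Let d be a metric on the vertices of 𝒢, let ℋ be the graph on configurations with an edge between x and y whenever y = x − e_i + e_j for some distinct vertices i, j, with edge length l(x,y) = d(i,j), and let ρ be the induced path metric on configurations. Then for any two configurations x, y with y = x − e_i + e_j it holds that ρ(x,y) = l(x,y) = d(i,j). -/
namespace ARW

open Finset

variable {V : Type*} [Fintype V] [DecidableEq V]

/-- The path metric `ρ` on configurations induced by the graph `ℋ` in which `x` and
`y = x − e_i + e_j` (for distinct vertices `i ≠ j`) are joined by an edge of length
`d(i,j)`:  `ρ(x,y)` is the infimum of the total length of a chain of such single-particle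
moves from `x` to `y`. -/
noncomputable def pathMetric {V : Type*} [Fintype V] [DecidableEq V]
    (d : V → V → ℝ) (n : ℕ) (x y : Sym V n) : ℝ :=
  sInf {L : ℝ | ∃ (m : ℕ) (c : ℕ → Sym V n) (a b : ℕ → V),
    c 0 = x ∧ c m = y ∧
    (∀ t < m, a t ≠ b t ∧
      ((c (t + 1) : Multiset V) = b t ::ₘ ((c t : Multiset V).erase (a t)))) ∧
    L = ∑ t ∈ Finset.range m, d (a t) (b t)}

/-- **Proposition `prop:distance`.**  Let `d` be a metric on the vertices of `G`, and let
`ρ` be the induced path metric on configurations as above.  Then for any two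
configurations `x`, `y` with `y = x − e_i + e_j` (for `i ≠ j`), `ρ(x,y) = d(i,j)`. -/
theorem pathMetric_of_neighboring {V : Type*} [Fintype V] [DecidableEq V]
    (G : SimpleGraph V) (hG : G.Connected)
    (d : V → V → ℝ) (hd0 : ∀ i, d i i = 0) (hdpos : ∀ i j, i ≠ j → 0 < d i j)
    (hdsymm : ∀ i j, d i j = d j i) (hdtri : ∀ i j k, d i k ≤ d i j + d j k)
    (n : ℕ) (x y : Sym V n) (i j : V) (hij : i ≠ j)
    (hi : i ∈ (x : Multiset V))
    (hxy : (y : Multiset V) = j ::ₘ ((x : Multiset V).erase i)) :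
    pathMetric d n x y = d i j := by
  have dnn : ∀ a b, 0 ≤ d a b := by
    intro a b
    rcases eq_or_ne a b with h | h
    · simp [h, hd0]
    · exact (hdpos a b h).le
  set S : Set ℝ := {L : ℝ | ∃ (m : ℕ) (c : ℕ → Sym V n) (a b : ℕ → V),
    c 0 = x ∧ c m = y ∧
    (∀ t < m, a t ≠ b t ∧
      ((c (t + 1) : Multiset V) = b t ::ₘ ((c t : Multiset V).erase (a t)))) ∧
    L = ∑ t ∈ Finset.range m, d (a t) (b t)} with hS
  have hmem : d i j ∈ S := by
    refine ⟨1, fun t => if t = 0 then x else y, fun _ => i, fun _ => j, by simp, by simp, ?_, by simp⟩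
    intro t ht
    interval_cases t
    exact ⟨hij, by simpa using hxy⟩
  -- potential function
  set f : Multiset V → ℝ := fun s => (s.map (fun v => d v j)).sum with hf
  have fcons : ∀ (v : V) (s : Multiset V), f (v ::ₘ s) = d v j + f s := by
    intro v s; simp [hf]
  have hfxy : f (x : Multiset V) - f (y : Multiset V) = d i j := by
    have hx : (x : Multiset V) = i ::ₘ ((x : Multiset V).erase i) :=
      (Multiset.cons_erase hi).symm
    rw [hxy, fcons, hx, fcons, hd0, Multiset.erase_cons_head]
    ring
  have hlb : ∀ L ∈ S, d i j ≤ L := by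
    rintro L ⟨m, c, a, b, h0, hm, hstep, hL⟩
    have step : ∀ t < m, f (c t : Multiset V) - f (c (t + 1) : Multiset V) ≤ d (a t) (b t) := by
      intro t ht
      obtain ⟨-, heq⟩ := hstep t ht
      rw [heq, fcons]
      by_cases hmem' : a t ∈ (c t : Multiset V)
      · have hc : (c t : Multiset V) = a t ::ₘ ((c t : Multiset V).erase (a t)) :=
          (Multiset.cons_erase hmem').symm
        calc f (c t : Multiset V) - (d (b t) j + f ((c t : Multiset V).erase (a t)))
            = d (a t) j - d (b t) j := by rw [hc, fcons, Multiset.erase_cons_head]; ring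
          _ ≤ d (a t) (b t) := by
              have := hdtri (a t) (b t) j
              linarith
      · rw [Multiset.erase_of_notMem hmem']
        have := dnn (b t) j
        have := dnn (a t) (b t)
        linarith
    have main : ∀ k ≤ m, f (x : Multiset V) - f (c k : Multiset V) ≤
        ∑ t ∈ Finset.range k, d (a t) (b t) := by
      intro k hk
      induction k with
      | zero => simp [h0]
      | succ k ih =>
        have hk' : k ≤ m := Nat.le_of_succ_le hk
        have h1 := ih hk'
        have h2 := step k (Nat.lt_of_succ_le hk)
        rw [Finset.sum_range_succ]
        linarith
    have := main m le_rfl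
    rw [hm] at this
    rw [hL]
    linarith [hfxy]
  exact le_antisymm (csInf_le ⟨d i j, hlb⟩ hmem) (le_csInf ⟨_, hmem⟩ hlb)

end ARW
end

section
/- For all configurations x and all vertices i, the total variation distance between the ARW single-particle transition distribution P_x(i,·) and the lazy uniform random-walk distribution Q(i,·) satisfies ‖P_x(i,·) − Q(i,·)‖_TV ≤ (e^{β/2} − 1)/(e^{β/2} + 1), where β ≥ 0 is the ARW parameter. -/
namespace ARW

open Finset

variable {V : Type*} [Fintype V] [DecidableEq V]

lemma sum_sub_one_le_prod_sub_one {V : Type*} [DecidableEq V] (A : Finset V) (u : V → ℝ)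
    (h : ∀ j ∈ A, 1 ≤ u j) :
    ∑ j ∈ A, (u j - 1) ≤ (∏ j ∈ A, u j) - 1 := by
  induction A using Finset.induction with
  | empty => simp
  | @insert a s ha ih =>
    rw [Finset.sum_insert ha, Finset.prod_insert ha]
    have h1 := h _ (Finset.mem_insert_self a s)
    have h2 : ∀ j ∈ s, 1 ≤ u j := fun j hjs => h j (Finset.mem_insert_of_mem hjs)
    have hnn : (0:ℝ) ≤ ∑ j ∈ s, (u j - 1) :=
      Finset.sum_nonneg (fun j hj => by linarith [h2 j hj])
    have := ih h2
    nlinarith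


lemma key_arith (R m k T Z : ℝ) (hR : 1 ≤ R) (hm1 : 1 ≤ m) (hk1 : 1 ≤ k)
    (hkm : k ≤ m) (hkT : k ≤ T) (hTub : T ≤ k + (R^2 - 1)) (hZ2 : T + (m - k) ≤ Z) :
    T/Z - k/m ≤ (R-1)/(R+1) := by
  have hden : (0:ℝ) < T + (m - k) := by linarith
  have hden2 : (0:ℝ) < R^2 + m - 1 := by nlinarith
  have hm0 : (0:ℝ) < m := by linarith
  have hR0 : (0:ℝ) < R + 1 := by linarith
  have h1 : T / Z ≤ T / (T + (m - k)) :=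
    div_le_div_of_nonneg_left (by linarith) hden hZ2
  have h2 : T / (T + (m - k)) ≤ (k - 1 + R^2) / (R^2 + m - 1) := by
    rw [div_le_div_iff₀ hden hden2]
    nlinarith [mul_nonneg (by linarith : (0:ℝ) ≤ m - k) (by linarith : (0:ℝ) ≤ k - 1 + R^2 - T)]
  have h3 : (k - 1 + R^2) / (R^2 + m - 1) - k / m ≤ (R-1)/(R+1) := by
    rw [div_sub_div _ _ hden2.ne' hm0.ne', div_le_div_iff₀ (by positivity) hR0]
    nlinarith [mul_nonneg (sub_nonneg.2 hR) (sq_nonneg (m - 1 - R)),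
      mul_nonneg (mul_nonneg (sub_nonneg.2 hR) (sub_nonneg.2 hk1)) (sq_nonneg (R+1))]
  linarith

lemma key {V : Type*} [DecidableEq V] (S : Finset V) (hS : S.Nonempty) (t : V → ℝ)
    (ht : ∀ j ∈ S, 1 ≤ t j) (R : ℝ) (hR : 1 ≤ R)
    (hsum : ∀ A ⊆ S, ∑ j ∈ A, t j ≤ A.card + (R^2 - 1)) :
    (1/2) * ∑ j ∈ S, |t j / (∑ l ∈ S, t l) - 1/(S.card : ℝ)| ≤ (R-1)/(R+1) := by
  classical
  set m : ℝ := (S.card : ℝ) with hm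
  set Z : ℝ := ∑ l ∈ S, t l with hZdef
  have hm1 : 1 ≤ m := by
    rw [hm]
    exact_mod_cast Finset.card_pos.2 hS
  have hZm : m ≤ Z := by
    calc m = ∑ _j ∈ S, (1:ℝ) := by simp [hm]
    _ ≤ Z := Finset.sum_le_sum ht
  have hZ0 : 0 < Z := lt_of_lt_of_le (by linarith) hZm
  set A : Finset V := S.filter (fun j => 1/m < t j / Z) with hA
  have hAS : A ⊆ S := Finset.filter_subset _ _
  set k : ℝ := (A.card : ℝ) with hk
  set T : ℝ := ∑ j ∈ A, t j with hT
  -- sum of deviations is 0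
  have hsum0 : ∑ j ∈ S, (t j / Z - 1/m) = 0 := by
    rw [Finset.sum_sub_distrib, ← Finset.sum_div]
    simp [← hZdef, div_self hZ0.ne', hm]
    field_simp
    norm_num
  have habs : ∑ j ∈ S, |t j / Z - 1/m| = 2 * ∑ j ∈ A, (t j / Z - 1/m) := by
    rw [← Finset.sum_filter_add_sum_filter_not S (fun j => 1/m < t j / Z)]
    have h1 : ∑ j ∈ A, |t j / Z - 1/m| = ∑ j ∈ A, (t j / Z - 1/m) := by
      apply Finset.sum_congr rfl
      intro j hj
      have := (Finset.mem_filter.1 hj).2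
      rw [abs_of_pos (by linarith)]
    have h2 : ∑ j ∈ S.filter (fun j => ¬ (1/m < t j / Z)), |t j / Z - 1/m|
        = - ∑ j ∈ S.filter (fun j => ¬ (1/m < t j / Z)), (t j / Z - 1/m) := by
      rw [← Finset.sum_neg_distrib]
      apply Finset.sum_congr rfl
      intro j hj
      have := (Finset.mem_filter.1 hj).2
      rw [abs_of_nonpos (by push_neg at this; linarith)]
    have h3 : ∑ j ∈ A, (t j / Z - 1/m)
        + ∑ j ∈ S.filter (fun j => ¬ (1/m < t j / Z)), (t j / Z - 1/m) = 0 := by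
      rw [Finset.sum_filter_add_sum_filter_not]; exact hsum0
    rw [h1, h2]; linarith
  rw [habs]
  have hAsum : ∑ j ∈ A, (t j / Z - 1/m) = T / Z - k / m := by
    rw [Finset.sum_sub_distrib, ← Finset.sum_div, ← hT]
    simp [hk, div_eq_mul_inv, mul_comm]
  rw [hAsum]
  have hhalf : (1/2 : ℝ) * (2 * (T / Z - k / m)) = T / Z - k / m := by ring
  rw [hhalf]
  rcases Finset.eq_empty_or_nonempty A with hAe | hAne
  · have : T = 0 := by simp [hT, hAe]
    have hk0 : k = 0 := by simp [hk, hAe]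
    rw [this, hk0]
    simp
    exact div_nonneg (by linarith) (by linarith)
  · have hk1 : 1 ≤ k := by
      have h5 : 1 ≤ A.card := hAne.card_pos
      rw [hk]; exact_mod_cast h5
    have hkm : k ≤ m := by
      rw [hk, hm]; exact_mod_cast Finset.card_le_card hAS
    have hkT : k ≤ T := by
      calc k = ∑ _j ∈ A, (1:ℝ) := by simp [hk]
      _ ≤ T := Finset.sum_le_sum (fun j hj => ht j (hAS hj))
    have hTub : T ≤ k + (R^2 - 1) := hsum A hAS
    have hZ2 : T + (m - k) ≤ Z := by
      have : Z = T + ∑ j ∈ S \ A, t j := by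
        rw [hT, hZdef, ← Finset.sum_sdiff hAS]; ring
      have h4 : (m - k) ≤ ∑ j ∈ S \ A, t j := by
        have hcard : ((S \ A).card : ℝ) = m - k := by
          rw [Finset.card_sdiff_of_subset hAS]; push_cast [Finset.card_le_card hAS]; ring
        calc m - k = ∑ _j ∈ S \ A, (1:ℝ) := by simp [hcard.symm]
        _ ≤ _ := Finset.sum_le_sum (fun j hj => ht j (Finset.sdiff_subset hj))
      linarith
    exact key_arith R m k T Z hR hm1 hk1 hkm hkT hTub hZ2

/-- **Lemma `lemma:close-distributions`.**  For all configurations `x` (with a particle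
at `i`) and all vertices `i`, with `β ≥ 0`,
`‖P_x(i,·) − Q(i,·)‖_TV ≤ (e^{β/2} − 1)/(e^{β/2} + 1)`,
where `Q(i,·)` is the lazy uniform random-walk distribution at `i`. -/
theorem step_close_to_lazySRW {V : Type*} [Fintype V] [DecidableEq V]
    (G : SimpleGraph V) [DecidableRel G.Adj]
    (β : ℝ) (hβ : 0 ≤ β) (n : ℕ) (x : V → ℕ) (hx : ∑ v, x v = n)
    (i : V) (hxi : 1 ≤ x i) :
    tv (stepP G β n x i) (lazySRW G i) ≤
      (Real.exp (β / 2) - 1) / (Real.exp (β / 2) + 1) := by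
  classical
  have hn : 1 ≤ n := by
    have h := Finset.single_le_sum (f := x) (fun v _ => Nat.zero_le _) (Finset.mem_univ i)
    omega
  have hn0 : (0:ℝ) < n := by exact_mod_cast hn
  set N := G.neighborFinset i with hN
  have hiN : i ∉ N := by simp [hN]
  set S : Finset V := insert i N with hSdef
  set a : V → ℝ := fun j => if j = i then β/n*((x i:ℝ)-1) else β/n * x j with ha
  set t : V → ℝ := fun j => Real.exp (a j) with htdef
  have ha_nonneg : ∀ j, 0 ≤ a j := by
    intro j
    rw [ha]
    by_cases hji : j = i
    · have : (1:ℝ) ≤ (x i : ℝ) := by exact_mod_cast hxi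
      simp only [hji, if_pos rfl]
      apply mul_nonneg (div_nonneg hβ (Nat.cast_nonneg n))
      linarith
    · simp only [if_neg hji]
      positivity
  have ht1 : ∀ j, 1 ≤ t j := fun j => Real.one_le_exp (ha_nonneg j)
  have hZf : Zf G β n x i = ∑ j ∈ S, t j := by
    rw [hSdef, Finset.sum_insert hiN, Zf]
    have h1 : t i = Real.exp (β/n*((x i:ℝ)-1)) := by simp [htdef, ha]
    have h2 : ∀ j ∈ N, t j = Real.exp (β/n * x j) := by
      intro j hj
      have hji : j ≠ i := by rintro rfl; exact hiN hj
      simp [htdef, ha, hji]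
    rw [h1, Finset.sum_congr rfl h2]
    ring
  have hcard : ((G.degree i : ℝ) + 1) = (S.card : ℝ) := by
    rw [hSdef, Finset.card_insert_of_notMem hiN]
    push_cast
    rw [hN, G.card_neighborFinset_eq_degree]
  have hmem : ∀ j, j ∈ S ↔ (G.Adj i j ∨ i = j) := by
    intro j
    simp [hSdef, hN, SimpleGraph.mem_neighborFinset, eq_comm, or_comm]
  have hstep : ∀ j, stepP G β n x i j = if j ∈ S then t j / (∑ l ∈ S, t l) else 0 := by
    intro j
    rw [stepP]
    by_cases hadj : G.Adj i j
    · have hji : j ≠ i := by rintro rfl; exact G.irrefl hadj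
      rw [if_pos hadj, if_pos ((hmem j).2 (Or.inl hadj)), hZf]
      congr 1
      simp [htdef, ha, hji]
    · rw [if_neg hadj]
      by_cases hij : i = j
      · rw [if_pos hij, if_pos ((hmem j).2 (Or.inr hij)), hZf]
        subst hij
        congr 1
        simp [htdef, ha]
      · rw [if_neg hij, if_neg (fun hjS => by rcases (hmem j).1 hjS with h | h <;> tauto)]
  have hlazy : ∀ j, lazySRW G i j = if j ∈ S then 1/(S.card:ℝ) else 0 := by
    intro j
    rw [lazySRW, ← hcard]
    by_cases hjS : j ∈ S
    · rw [if_pos ((hmem j).1 hjS), if_pos hjS]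
    · rw [if_neg (fun h => hjS ((hmem j).2 h)), if_neg hjS]
  have hfun : ∀ s, |stepP G β n x i s - lazySRW G i s|
      = if s ∈ S then |t s / (∑ l ∈ S, t l) - 1/(S.card:ℝ)| else 0 := by
    intro s
    rw [hstep, hlazy]
    by_cases hsS : s ∈ S <;> simp [hsS]
  rw [tv, Finset.sum_congr rfl (fun s _ => hfun s), Finset.sum_ite_mem, Finset.univ_inter]
  apply key S ⟨i, Finset.mem_insert_self i N⟩ t (fun j _ => ht1 j) (Real.exp (β/2))
    (Real.one_le_exp (by linarith))
  intro A hAS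
  have hR2 : Real.exp (β/2) ^ 2 = Real.exp β := by
    rw [sq, ← Real.exp_add]
    ring_nf
  have h2 : ∑ j ∈ A, (t j - 1) ≤ (∏ j ∈ A, t j) - 1 :=
    sum_sub_one_le_prod_sub_one A t (fun j _ => ht1 j)
  have h3 : ∏ j ∈ A, t j = Real.exp (∑ j ∈ A, a j) := by
    rw [htdef, ← Real.exp_sum]
  have hsumS : ∑ j ∈ S, a j ≤ β := by
    have e1 : ∑ j ∈ S, a j = β/n * (((x i : ℝ) + ∑ j ∈ N, (x j : ℝ)) - 1) := by
      rw [hSdef, Finset.sum_insert hiN]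
      have h1 : a i = β/n*((x i:ℝ)-1) := by simp [ha]
      have h2 : ∀ j ∈ N, a j = β/n * x j := by
        intro j hj
        have hji : j ≠ i := by rintro rfl; exact hiN hj
        simp [ha, hji]
      rw [h1, Finset.sum_congr rfl h2, ← Finset.mul_sum]
      ring
    have e2 : (x i : ℝ) + ∑ j ∈ N, (x j : ℝ) ≤ n := by
      have : ∑ j ∈ S, x j ≤ ∑ v, x v :=
        Finset.sum_le_sum_of_subset (Finset.subset_univ S)
      rw [hx] at this
      have e3 : ∑ j ∈ S, x j = x i + ∑ j ∈ N, x j := by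
        rw [hSdef, Finset.sum_insert hiN]
      rw [e3] at this
      exact_mod_cast this
    calc ∑ j ∈ S, a j = β/n * (((x i : ℝ) + ∑ j ∈ N, (x j : ℝ)) - 1) := e1
    _ ≤ β/n * ((n : ℝ) - 1) := by
        apply mul_le_mul_of_nonneg_left (by linarith) (div_nonneg hβ (le_of_lt hn0))
    _ ≤ β/n * n := by
        apply mul_le_mul_of_nonneg_left (by linarith) (div_nonneg hβ (le_of_lt hn0))
    _ = β := by field_simp
  have hsumA : ∑ j ∈ A, a j ≤ β := by
    have := Finset.sum_le_sum_of_subset_of_nonneg hAS (fun j _ _ => ha_nonneg j)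
    linarith
  have h4 : Real.exp (∑ j ∈ A, a j) ≤ Real.exp (β/2) ^ 2 := by
    rw [hR2]
    exact Real.exp_le_exp.2 hsumA
  have h5 : ∑ j ∈ A, t j = (A.card : ℝ) + ∑ j ∈ A, (t j - 1) := by
    rw [Finset.sum_sub_distrib]
    simp
  rw [h5]
  rw [h3] at h2
  linarith
end ARW
end

section
/- Let x and y be neighbouring configurations (y = x − e_i + e_j for some vertices i ≠ j) and let v be any vertex. Then the ARW single-particle transition distributions satisfy ‖P_x(v,·) − P_y(v,·)‖_TV ≤ (Δ+1)·β/n, where Δ is the maximum degree of 𝒢 and β ≥ 0 is the ARW parameter. -/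
namespace ARW

open Finset

variable {V : Type*} [Fintype V] [DecidableEq V]

noncomputable def num (G : SimpleGraph V) [DecidableRel G.Adj] (β : ℝ) (n : ℕ)
    (x : V → ℕ) (v w : V) : ℝ :=
  if G.Adj v w then Real.exp (β / n * x w)
  else if v = w then Real.exp (β / n * ((x v : ℝ) - 1)) else 0

lemma Zf_pos (G : SimpleGraph V) [DecidableRel G.Adj] (β : ℝ) (n : ℕ)
    (x : V → ℕ) (v : V) : 0 < Zf G β n x v :=
  add_pos_of_nonneg_of_pos (Finset.sum_nonneg fun _ _ => (Real.exp_pos _).le) (Real.exp_pos _)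

lemma num_nonneg (G : SimpleGraph V) [DecidableRel G.Adj] (β : ℝ) (n : ℕ)
    (x : V → ℕ) (v w : V) : 0 ≤ num G β n x v w := by
  unfold num; split_ifs <;> first | exact (Real.exp_pos _).le | exact le_refl 0

lemma stepP_eq (G : SimpleGraph V) [DecidableRel G.Adj] (β : ℝ) (n : ℕ)
    (x : V → ℕ) (v w : V) :
    stepP G β n x v w = num G β n x v w / Zf G β n x v := by
  unfold stepP num; split_ifs <;> simp

lemma sum_num (G : SimpleGraph V) [DecidableRel G.Adj] (β : ℝ) (n : ℕ)
    (x : V → ℕ) (v : V) : ∑ w, num G β n x v w = Zf G β n x v := by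
  classical
  rw [Zf, ← Finset.sum_add_sum_compl (G.neighborFinset v)]
  congr 1
  · exact Finset.sum_congr rfl fun w hw => by
      rw [num, if_pos (by rwa [← SimpleGraph.mem_neighborFinset])]
  · have h1 : ∑ w ∈ (G.neighborFinset v)ᶜ, num G β n x v w
        = ∑ w ∈ (G.neighborFinset v)ᶜ,
            (if v = w then Real.exp (β / n * ((x v : ℝ) - 1)) else 0) := by
      refine Finset.sum_congr rfl fun w hw => ?_
      rw [num, if_neg]
      rw [Finset.mem_compl, SimpleGraph.mem_neighborFinset] at hw
      exact hw
    rw [h1, Finset.sum_ite_eq]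
    simp

/-- TV between two normalized nonnegative vectors bounded by ℓ¹ distance over first norm. -/
lemma tv_frac_bound {S : Type*} [Fintype S] (a b : S → ℝ) (A B : ℝ)
    (hA : 0 < A) (hB : 0 < B) (hb : ∀ s, 0 ≤ b s)
    (hsA : ∑ s, a s = A) (hsB : ∑ s, b s = B) :
    (1/2) * ∑ s, |a s / A - b s / B| ≤ (∑ s, |a s - b s|) / A := by
  have hAB : |A - B| ≤ ∑ s, |a s - b s| := by
    rw [← hsA, ← hsB, ← Finset.sum_sub_distrib]
    exact Finset.abs_sum_le_sum_abs _ _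
  have hptw : ∀ s, |a s / A - b s / B| ≤ |a s - b s| / A + b s * |A - B| / (A * B) := by
    intro s
    have h : a s / A - b s / B = (a s - b s) / A + (b s * (B - A)) / (A * B) := by
      field_simp; ring
    rw [h]
    refine (abs_add_le _ _).trans (le_of_eq ?_)
    rw [abs_div, abs_div, abs_of_pos hA, abs_of_pos (mul_pos hA hB), abs_mul,
      abs_of_nonneg (hb s), abs_sub_comm B A]
  have h2 : ∑ s, (b s * |A - B| / (A * B)) = |A - B| / A := by
    have h3 : ∑ s, (b s * |A - B| / (A * B)) = (∑ s, b s) * |A - B| / (A * B) := by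
      rw [← Finset.sum_div, ← Finset.sum_mul]
    rw [h3, hsB, mul_comm A B, mul_div_mul_left _ _ hB.ne']
  have h4 : ∑ s, |a s / A - b s / B| ≤ (∑ s, |a s - b s|) / A + |A - B| / A := by
    calc ∑ s, |a s / A - b s / B|
        ≤ ∑ s, (|a s - b s| / A + b s * |A - B| / (A * B)) :=
          Finset.sum_le_sum fun s _ => hptw s
      _ = (∑ s, |a s - b s|) / A + |A - B| / A := by
          rw [Finset.sum_add_distrib, h2, Finset.sum_div]
  have h5 : |A - B| / A ≤ (∑ s, |a s - b s|) / A := by gcongr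
  linarith

lemma tv_frac_le_one {S : Type*} [Fintype S] (a b : S → ℝ) (A B : ℝ)
    (hA : 0 < A) (hB : 0 < B) (ha : ∀ s, 0 ≤ a s) (hb : ∀ s, 0 ≤ b s)
    (hsA : ∑ s, a s = A) (hsB : ∑ s, b s = B) :
    (1/2) * ∑ s, |a s / A - b s / B| ≤ 1 := by
  have h1 : ∑ s, |a s / A - b s / B| ≤ 2 := by
    calc ∑ s, |a s / A - b s / B| ≤ ∑ s, (a s / A + b s / B) := by
          refine Finset.sum_le_sum fun s _ => ?_
          have h := abs_sub (a s / A) (b s / B)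
          rwa [abs_of_nonneg (div_nonneg (ha s) hA.le),
            abs_of_nonneg (div_nonneg (hb s) hB.le)] at h
      _ = 2 := by
          rw [Finset.sum_add_distrib, ← Finset.sum_div, ← Finset.sum_div, hsA, hsB,
            div_self hA.ne', div_self hB.ne']
          norm_num
  linarith

lemma exp_half_le_two : Real.exp (1/2 : ℝ) ≤ 2 := by
  have h : Real.exp (1/2 : ℝ) * Real.exp (1/2 : ℝ) = Real.exp 1 := by
    rw [← Real.exp_add]; norm_num
  nlinarith [Real.exp_one_lt_d9, Real.exp_pos (1/2 : ℝ)]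


set_option maxHeartbeats 1000000 in
/-- **Lemma `lemma:TV-bound-same-vertex`.**  Let `x` and `y = x − e_i + e_j` be
neighbouring configurations (`i ≠ j`, a particle at `i`) and let `v` be any vertex.
Then `‖P_x(v,·) − P_y(v,·)‖_TV ≤ (Δ+1)·β/n`, where `Δ` is the maximum degree of `G`
and `β ≥ 0`. -/
theorem step_tv_neighboring_configs {V : Type*} [Fintype V] [DecidableEq V]
    (G : SimpleGraph V) [DecidableRel G.Adj]
    (β : ℝ) (hβ : 0 ≤ β) (n : ℕ) (hn : 1 ≤ n)
    (x : V → ℕ) (hx : ∑ v, x v = n) (i j : V) (hij : i ≠ j) (hxi : 1 ≤ x i)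
    (y : V → ℕ)
    (hy : y = fun w => if w = i then x w - 1 else if w = j then x w + 1 else x w)
    (v : V) :
    tv (stepP G β n x v) (stepP G β n y v) ≤
      ((G.maxDegree : ℝ) + 1) / n * β := by
  classical
  have hn0 : (0:ℝ) < n := by exact_mod_cast hn
  have hc0 : 0 ≤ β / n := div_nonneg hβ hn0.le
  have hRHS : ((G.maxDegree : ℝ) + 1) / n * β = ((G.maxDegree : ℝ) + 1) * (β / n) := by
    ring
  by_cases hΔ : G.maxDegree = 0
  · -- no edges: the two distributions coincide
    have hdeg : G.neighborFinset v = ∅ := by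
      have h := G.degree_le_maxDegree v
      rw [hΔ, Nat.le_zero] at h
      rwa [← Finset.card_eq_zero, ← SimpleGraph.degree]
    have hadj : ∀ w, ¬ G.Adj v w := by
      intro w hw
      have : w ∈ G.neighborFinset v := by rwa [SimpleGraph.mem_neighborFinset]
      simp [hdeg] at this
    have heq : ∀ z : V → ℕ, ∀ w, stepP G β n z v w = if v = w then 1 else 0 := by
      intro z w
      rw [stepP, if_neg (hadj w)]
      split_ifs with h
      · rw [Zf, hdeg]
        simp
      · rfl
    have h0 : tv (stepP G β n x v) (stepP G β n y v) = 0 := by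
      rw [tv]
      have : ∀ w ∈ Finset.univ, |stepP G β n x v w - stepP G β n y v w| = 0 := by
        intro w _
        rw [heq x w, heq y w, sub_self, abs_zero]
      rw [Finset.sum_congr rfl this]
      simp
    rw [h0]
    positivity
  · have hΔ1 : 1 ≤ (G.maxDegree : ℝ) := by
      exact_mod_cast Nat.one_le_iff_ne_zero.mpr hΔ
    have hA : 0 < Zf G β n x v := Zf_pos G β n x v
    have hB : 0 < Zf G β n y v := Zf_pos G β n y v
    have hstep : tv (stepP G β n x v) (stepP G β n y v)
        = (1/2) * ∑ w, |num G β n x v w / Zf G β n x v - num G β n y v w / Zf G β n y v| := by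
      rw [tv]
      congr 1
      refine Finset.sum_congr rfl fun w _ => ?_
      rw [stepP_eq, stepP_eq]
    rw [hstep, hRHS]
    -- facts about y
    have hyi : (y i : ℝ) = (x i : ℝ) - 1 := by
      rw [hy]; simp only [if_pos rfl]
      push_cast [Nat.cast_sub hxi]
      ring
    have hyj : (y j : ℝ) = (x j : ℝ) + 1 := by
      rw [hy]; simp only [if_neg hij.symm, if_pos rfl]
      push_cast
      ring
    have hyw : ∀ w, w ≠ i → w ≠ j → y w = x w := by
      intro w h1 h2; rw [hy]; simp [h1, h2]
    have key : ∀ t : ℝ, Real.exp (β / n * (t - 1)) = Real.exp (-(β/n)) * Real.exp (β / n * t) := by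
      intro t; rw [← Real.exp_add]; congr 1; ring
    have hbi : num G β n y v i = Real.exp (-(β/n)) * num G β n x v i := by
      rw [num, num]
      split_ifs with h1 h2
      · rw [hyi, key]
      · rw [h2, hyi]
        exact key _
      · ring
    have hbj : num G β n y v j = Real.exp (β/n) * num G β n x v j := by
      have keyj : ∀ t : ℝ, Real.exp (β / n * (t + 1)) = Real.exp (β/n) * Real.exp (β / n * t) := by
        intro t; rw [← Real.exp_add]; congr 1; ring
      rw [num, num]
      split_ifs with h1 h2
      · rw [hyj, keyj]
      · rw [h2, hyj]
        have : (x j : ℝ) + 1 - 1 = (x j : ℝ) - 1 + 1 := by ring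
        rw [this, keyj]
      · ring
    have hbw : ∀ w, w ≠ i → w ≠ j → num G β n y v w = num G β n x v w := by
      intro w h1 h2
      rw [num, num, hyw w h1 h2]
      split_ifs with hA1 hA2
      · rfl
      · rw [hA2, hyw w h1 h2]
      · rfl
    by_cases hcc : β / n ≤ 1/2
    · -- small c case
      refine le_trans (tv_frac_bound _ _ _ _ hA hB (fun s => num_nonneg G β n y v s)
        (sum_num G β n x v) (sum_num G β n y v)) ?_
      have hD : (∑ w, |num G β n x v w - num G β n y v w|)
          = num G β n x v i * (1 - Real.exp (-(β/n)))
            + num G β n x v j * (Real.exp (β/n) - 1) := by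
        rw [← Finset.sum_subset (Finset.subset_univ ({i, j} : Finset V))]
        · rw [Finset.sum_pair hij, hbi, hbj]
          have e1 : Real.exp (-(β/n)) ≤ 1 := Real.exp_le_one_iff.mpr (by linarith)
          have e2 : 1 ≤ Real.exp (β/n) := Real.one_le_exp hc0
          rw [abs_of_nonneg (by nlinarith [num_nonneg G β n x v i]),
            abs_of_nonpos (by nlinarith [num_nonneg G β n x v j])]
          ring
        · intro w _ hw
          simp only [Finset.mem_insert, Finset.mem_singleton, not_or] at hw
          rw [hbw w hw.1 hw.2, sub_self, abs_zero]
      have he1 : 1 - Real.exp (-(β/n)) ≤ 2 * (β/n) := by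
        have := Real.add_one_le_exp (-(β/n))
        linarith
      have he2 : Real.exp (β/n) - 1 ≤ 2 * (β/n) := by
        have hle : Real.exp (β/n) ≤ 2 := by
          calc Real.exp (β/n) ≤ Real.exp (1/2) := Real.exp_le_exp.mpr hcc
            _ ≤ 2 := exp_half_le_two
        have h1 := Real.add_one_le_exp (-(β/n))
        have h2 : Real.exp (-(β/n)) * Real.exp (β/n) = 1 := by
          rw [← Real.exp_add]; simp
        nlinarith [Real.exp_pos (β/n)]
      have hij_le : num G β n x v i + num G β n x v j ≤ Zf G β n x v := by
        rw [← sum_num G β n x v, ← Finset.sum_pair hij]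
        exact Finset.sum_le_sum_of_subset_of_nonneg (Finset.subset_univ _)
          (fun w _ _ => num_nonneg G β n x v w)
      rw [hD, div_le_iff₀ hA]
      have hni := num_nonneg G β n x v i
      have hnj := num_nonneg G β n x v j
      nlinarith [mul_le_mul_of_nonneg_left he1 hni, mul_le_mul_of_nonneg_left he2 hnj,
        mul_le_mul_of_nonneg_left hij_le (by positivity : (0:ℝ) ≤ 2 * (β/n)),
        mul_le_mul_of_nonneg_right hΔ1 hc0]
    · -- large c case: TV ≤ 1 ≤ (Δ+1)β/n
      push_neg at hcc
      refine le_trans (tv_frac_le_one _ _ _ _ hA hB (fun s => num_nonneg G β n x v s)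
        (fun s => num_nonneg G β n y v s) (sum_num G β n x v) (sum_num G β n y v)) ?_
      have h2c : (1:ℝ) < 2 * (β/n) := by linarith
      have h3 : 2 * (β/n) ≤ ((G.maxDegree:ℝ) + 1) * (β/n) :=
        mul_le_mul_of_nonneg_right (by linarith) hc0
      linarith



end ARW
end
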